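/- arXiv:2308.04620 — 7 statements merged into one kernel-verified Lean document; each statement's English description precedes it below -/
import Mathlib

section
/- If a hypothesis class H ⊆ Y^X shatters a Bandit Littlestone tree of depth d, then for every x ∈ X with |H(x)| ≥ d + 2 one can construct a shattered Bandit Littlestone tree of depth d + 1; consequently, for every x ∈ X, the projection size satisfies |H(x)| ≤ BL(H) + 1. -/
open scoped Classical

variable {X : Type*} {Y : Type*}

/-- `H` shatters the Bandit Littlestone tree `Tr` (nodes indexed by label prefixes)
to depth `d`: for every label path some hypothesis avoids every label on the path. -/
def BLShattered (H : Set (X → Y)) (d : ℕ) (Tr : List Y → X) : Prop :=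
  ∀ y : Fin d → Y, ∃ h ∈ H, ∀ t : Fin d, h (Tr ((List.ofFn y).take t.1)) ≠ y t

/-- `H` shatters some Bandit Littlestone tree of depth `d`. -/
def BLShatteredDepth (H : Set (X → Y)) (d : ℕ) : Prop :=
  ∃ Tr : List Y → X, BLShattered H d Tr

/-- The Bandit Littlestone dimension of `H`, as an extended natural number. -/
noncomputable def BLdim (H : Set (X → Y)) : ℕ∞ :=
  ⨆ d ∈ {d : ℕ | BLShatteredDepth H d}, (d : ℕ∞)

/-- `H` shatters the (multiclass) Littlestone tree with nodes `Tr` and edge labels `e`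
to depth `d`: edge labels at each internal node are distinct, and every binary path is
realized by some hypothesis agreeing with the edge labels. -/
def LShattered (H : Set (X → Y)) (d : ℕ) (Tr : List Bool → X)
    (e : List Bool → Bool → Y) : Prop :=
  (∀ p : List Bool, p.length < d → e p false ≠ e p true) ∧
  ∀ σ : Fin d → Bool, ∃ h ∈ H, ∀ t : Fin d,
    h (Tr ((List.ofFn σ).take t.1)) = e ((List.ofFn σ).take t.1) (σ t)

/-- `H` shatters some Littlestone tree of depth `d`. -/
def LShatteredDepth (H : Set (X → Y)) (d : ℕ) : Prop :=
  ∃ Tr e, LShattered H d Tr e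

/-- The multiclass Littlestone dimension of `H`, as an extended natural number. -/
noncomputable def Ldim (H : Set (X → Y)) : ℕ∞ :=
  ⨆ d ∈ {d : ℕ | LShatteredDepth H d}, (d : ℕ∞)

/-- The 0-1 loss class of `H`, as a class of `Prop`-valued functions on `X × Y`. -/
def lossClass (H : Set (X → Y)) : Set (X × Y → Prop) :=
  {f | ∃ h ∈ H, f = fun p => h p.1 ≠ p.2}

/-- The Sequential Graph dimension: the Littlestone dimension of the loss class. -/
noncomputable def SGdim (H : Set (X → Y)) : ℕ∞ := Ldim (lossClass H)

/-- The projection `H(x) = {h x : h ∈ H}`. -/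
def proj (H : Set (X → Y)) (x : X) : Set Y := {y | ∃ h ∈ H, h x = y}

/-- If `|H(x)| ≥ d + 1`, the constant-`x` tree of depth `d` is BL-shattered. -/
lemma constShatter (H : Set (X → Y)) (x : X) (d : ℕ)
    (hd : (d : ℕ∞) + 1 ≤ (proj H x).encard) : BLShatteredDepth H d := by
  refine ⟨fun _ => x, fun y => ?_⟩
  set S : Finset Y := Finset.image y Finset.univ with hS
  have hScard : (↑S : Set Y).encard ≤ (d : ℕ∞) := by
    rw [Set.encard_coe_eq_coe_finsetCard]
    exact_mod_cast Finset.card_image_le.trans (by simp)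
  have hnsub : ¬ proj H x ⊆ ↑S := by
    intro hsub
    have h1 : (proj H x).encard ≤ (d : ℕ∞) := (Set.encard_mono hsub).trans hScard
    have h2 : (d : ℕ∞) + 1 ≤ (d : ℕ∞) := hd.trans h1
    have h3 : (d : ℕ∞) < (d : ℕ∞) + 1 := by
      have : ((d : ℕ) : ℕ∞) < ((d + 1 : ℕ) : ℕ∞) := by exact_mod_cast Nat.lt_succ_self d
      simpa using this
    exact absurd (lt_of_lt_of_le h3 h2) (lt_irrefl _)
  obtain ⟨a, ha, haS⟩ := Set.not_subset.mp hnsub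
  obtain ⟨h, hh, hhx⟩ := ha
  refine ⟨h, hh, fun t => ?_⟩
  intro hcontra
  apply haS
  simp only [hS, Finset.coe_image, Finset.coe_univ, Set.image_univ, Set.mem_range]
  exact ⟨t, by rw [← hcontra, hhx]⟩

/-- If `H` shatters a BL tree of depth `d`, then for every `x` with `|H(x)| ≥ d + 2`
one can construct a shattered BL tree of depth `d + 1`; consequently, for every `x`,
`|H(x)| ≤ BL(H) + 1`. -/
theorem stmt0 (H : Set (X → Y)) :
    (∀ d : ℕ, BLShatteredDepth H d →
      ∀ x : X, (d : ℕ∞) + 2 ≤ (proj H x).encard → BLShatteredDepth H (d + 1)) ∧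
    (∀ x : X, (proj H x).encard ≤ BLdim H + 1) := by
  have key : ∀ (x : X) (n : ℕ), (n : ℕ∞) + 1 ≤ (proj H x).encard → (n : ℕ∞) ≤ BLdim H := by
    intro x n hn
    have hmem : n ∈ {d : ℕ | BLShatteredDepth H d} := constShatter H x n hn
    exact le_iSup₂ (f := fun (d : ℕ) (_ : d ∈ {d : ℕ | BLShatteredDepth H d}) => (d : ℕ∞)) n hmem
  constructor
  · intro d _ x hx
    apply constShatter H x (d + 1)
    calc ((d + 1 : ℕ) : ℕ∞) + 1 = (d : ℕ∞) + 2 := by push_cast; ring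
      _ ≤ (proj H x).encard := hx
  · intro x
    by_contra hcon
    push_neg at hcon
    have hne : BLdim H + 1 ≠ ⊤ := hcon.ne_top
    have hBLne : BLdim H ≠ ⊤ := by
      intro h; rw [h] at hne; simp at hne
    obtain ⟨n, hn⟩ := WithTop.ne_top_iff_exists.mp hBLne
    rw [← hn] at hcon
    have h1 : ((n : ℕ∞) + 1) + 1 ≤ (proj H x).encard := Order.add_one_le_of_lt hcon
    have h2 : ((n + 1 : ℕ) : ℕ∞) + 1 ≤ (proj H x).encard := by
      calc ((n + 1 : ℕ) : ℕ∞) + 1 = ((n : ℕ∞) + 1) + 1 := by push_cast; ring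
        _ ≤ _ := h1
    have := key x (n + 1) h2
    rw [← hn] at this
    have hlt : (n : ℕ∞) < ((n + 1 : ℕ) : ℕ∞) := by exact_mod_cast Nat.lt_succ_self n
    exact absurd (lt_of_lt_of_le hlt this) (lt_irrefl _)
end

section
/- Suppose H ⊆ Y^X satisfies sup_{x∈X} |H(x)| ≤ C, with injections φ_x : H(x) → [C] and H̄ = { x ↦ φ_x(h(x)) : h ∈ H }. Then the Littlestone dimension of the loss class of H̄ equals the Littlestone dimension of the loss class of H; that is, SG(H̄) = SG(H). -/
open scoped Classical

variable {X : Type*} {Y : Type*}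

lemma exists_ext (d : ℕ) (p : List Bool) (hp : p.length < d) (b : Bool) :
    ∃ σ : Fin d → Bool, (List.ofFn σ).take p.length = p ∧ σ ⟨p.length, hp⟩ = b := by
  refine ⟨fun i => if h : i.1 < p.length then p.get ⟨i.1, h⟩ else b, ?_, ?_⟩
  · apply List.ext_getElem
    · simp [Nat.min_eq_left hp.le]
    · intro i h1 h2
      simp only [List.getElem_take, List.getElem_ofFn]
      simp [h2]
  · simp

/-- At any internal node of a shattered tree, some hypothesis takes value "false". -/
lemma realized_false {A : Type*} {G : Set (A → Prop)} {d : ℕ} {Tr : List Bool → A}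
    {e : List Bool → Bool → Prop} (hS : LShattered G d Tr e)
    (p : List Bool) (hp : p.length < d) : ∃ f ∈ G, ¬ f (Tr p) := by
  obtain ⟨σ₀, hσ₀, hσ₀b⟩ := exists_ext d p hp false
  obtain ⟨σ₁, hσ₁, hσ₁b⟩ := exists_ext d p hp true
  obtain ⟨f₀, hf₀G, hf₀⟩ := hS.2 σ₀
  obtain ⟨f₁, hf₁G, hf₁⟩ := hS.2 σ₁
  have e₀ : f₀ (Tr p) = e p false := by
    have := hf₀ ⟨p.length, hp⟩; rw [hσ₀] at this; rw [this, hσ₀b]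
  have e₁ : f₁ (Tr p) = e p true := by
    have := hf₁ ⟨p.length, hp⟩; rw [hσ₁] at this; rw [this, hσ₁b]
  by_contra hcon
  push_neg at hcon
  have h0 : f₀ (Tr p) := hcon f₀ hf₀G
  have h1 : f₁ (Tr p) := hcon f₁ hf₁G
  exact hS.1 p hp (by rw [← e₀, ← e₁]; exact propext (iff_of_true h0 h1))

/-- Direction: a shattered tree for `lossClass H` yields one for the relabeled class. -/
lemma dir_forward (H : Set (X → Y)) (C : ℕ) (φ : X → Y → Fin C)
    (hφ : ∀ x : X, Set.InjOn (φ x) (proj H x)) (d : ℕ)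
    (hd : LShatteredDepth (lossClass H) d) :
    LShatteredDepth (lossClass {g : X → Fin C | ∃ h ∈ H, g = fun x => φ x (h x)}) d := by
  obtain ⟨Tr, e, hS⟩ := hd
  have good : ∀ p : List Bool, p.length < d → ∃ h ∈ H, h (Tr p).1 = (Tr p).2 := by
    intro p hp
    obtain ⟨f, ⟨h, hh, rfl⟩, hfval⟩ := realized_false hS p hp
    exact ⟨h, hh, not_not.mp hfval⟩
  refine ⟨fun p => ((Tr p).1, φ (Tr p).1 (Tr p).2), e, hS.1, ?_⟩
  intro σ
  obtain ⟨f, ⟨h, hh, rfl⟩, hf⟩ := hS.2 σ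
  refine ⟨fun q => φ q.1 (h q.1) ≠ q.2, ⟨_, ⟨h, hh, rfl⟩, rfl⟩, ?_⟩
  intro t
  have ht := hf t
  set p := (List.ofFn σ).take t.1 with hpdef
  have hplen : p.length < d := by
    simp only [hpdef, List.length_take, List.length_ofFn]
    exact lt_of_le_of_lt (min_le_left _ _) t.2
  obtain ⟨h', hh', hval⟩ := good p hplen
  rw [← ht]
  apply propext
  have hmem1 : h (Tr p).1 ∈ proj H (Tr p).1 := ⟨h, hh, rfl⟩
  have hmem2 : (Tr p).2 ∈ proj H (Tr p).1 := ⟨h', hh', hval⟩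
  exact not_congr ((hφ (Tr p).1).eq_iff hmem1 hmem2)

/-- Direction: a shattered tree for the relabeled class yields one for `lossClass H`. -/
lemma dir_backward (H : Set (X → Y)) (C : ℕ) (φ : X → Y → Fin C)
    (hφ : ∀ x : X, Set.InjOn (φ x) (proj H x)) (d : ℕ)
    (hd : LShatteredDepth (lossClass {g : X → Fin C | ∃ h ∈ H, g = fun x => φ x (h x)}) d) :
    LShatteredDepth (lossClass H) d := by
  obtain ⟨Tr, e, hS⟩ := hd
  obtain ⟨f₀, ⟨g₀, ⟨h₀, hh₀, rfl⟩, rfl⟩, -⟩ := hS.2 (fun _ => false)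
  have good : ∀ p : List Bool, p.length < d →
      ∃ h ∈ H, φ (Tr p).1 (h (Tr p).1) = (Tr p).2 := by
    intro p hp
    obtain ⟨f, ⟨g, ⟨h, hh, rfl⟩, rfl⟩, hfval⟩ := realized_false hS p hp
    exact ⟨h, hh, not_not.mp hfval⟩
  refine ⟨fun p => ((Tr p).1,
    if hp : ∃ h ∈ H, φ (Tr p).1 (h (Tr p).1) = (Tr p).2
    then hp.choose (Tr p).1 else h₀ (Tr p).1), e, hS.1, ?_⟩
  intro σ
  obtain ⟨f, ⟨g, ⟨h, hh, rfl⟩, rfl⟩, hf⟩ := hS.2 σ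
  refine ⟨fun q => h q.1 ≠ q.2, ⟨h, hh, rfl⟩, ?_⟩
  intro t
  have ht := hf t
  set p := (List.ofFn σ).take t.1 with hpdef
  have hplen : p.length < d := by
    simp only [hpdef, List.length_take, List.length_ofFn]
    exact lt_of_le_of_lt (min_le_left _ _) t.2
  have hex : ∃ h ∈ H, φ (Tr p).1 (h (Tr p).1) = (Tr p).2 := good p hplen
  simp only [dif_pos hex]
  rw [← ht]
  apply propext
  have hmem1 : h (Tr p).1 ∈ proj H (Tr p).1 := ⟨h, hh, rfl⟩
  have hmem2 : hex.choose (Tr p).1 ∈ proj H (Tr p).1 :=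
    ⟨hex.choose, hex.choose_spec.1, rfl⟩
  have hval : φ (Tr p).1 (hex.choose (Tr p).1) = (Tr p).2 := hex.choose_spec.2
  have key := (not_congr ((hφ (Tr p).1).eq_iff hmem1 hmem2)).symm
  rw [hval] at key
  exact key

/-- If `sup_x |H(x)| ≤ C` and `φ x` is injective on `H(x)` for each `x`, then the
relabeled class `H̄ = {x ↦ φ x (h x) : h ∈ H} ⊆ [C]^X` satisfies `SG(H̄) = SG(H)`,
i.e. the Littlestone dimensions of the two loss classes coincide. -/
theorem stmt3 (H : Set (X → Y)) (C : ℕ)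
    (hC : ∀ x : X, (proj H x).encard ≤ (C : ℕ∞))
    (φ : X → Y → Fin C) (hφ : ∀ x : X, Set.InjOn (φ x) (proj H x)) :
    SGdim {g : X → Fin C | ∃ h ∈ H, g = fun x => φ x (h x)} = SGdim H := by
  have hset : {d : ℕ | LShatteredDepth
      (lossClass {g : X → Fin C | ∃ h ∈ H, g = fun x => φ x (h x)}) d}
      = {d : ℕ | LShatteredDepth (lossClass H) d} := by
    ext d
    exact ⟨dir_backward H C φ hφ d, dir_forward H C φ hφ d⟩
  unfold SGdim Ldim
  rw [hset]
end

section
/- Let H ⊆ Y^X with BL(H) < ∞. Then SG(H) = O(L(H) · log(BL(H))); in particular, finiteness of BL(H) implies finiteness of SG(H). -/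
/-!
Every multiclass Littlestone tree is a bandit Littlestone tree, so `L(H) ≤ BL(H) =: N`, and a
constant tree shows that `H` realizes at most `N + 1` labels at any point. A Sauer–Shelah-type
recursion on the root label, in which at most one child class keeps Littlestone dimension `L`,
bounds the number of label paths realized by `H` on a `Y`-ary tree of depth `d` by
`∑_{i ≤ L} (d choose i) (N + 1)^i ≤ ((N + 1) d + 1)^L`. A Littlestone tree of depth `d`
shattered by the loss class, read through the loss each label incurs, becomes a `Y`-ary tree
carrying `2^d` distinct realized paths. Hence `2^d ≤ ((N + 1) d + 1)^L`, which forces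
`d ≤ 12 L log (N + 2)`.
-/

open scoped Classical

variable {X : Type*} {Y : Type*}

universe u v

theorem Finset.sum_le_add_card_nsmul_of_subsingleton {ι M : Type*} [AddCommMonoid M]
    [PartialOrder M] [IsOrderedAddMonoid M] [CanonicallyOrderedAdd M] {F : Finset ι}
    {f : ι → M} {P : ι → Prop} {A B : M}
    (hP : ∀ a ∈ F, ∀ b ∈ F, P a → P b → a = b)
    (hA : ∀ a ∈ F, f a ≤ A) (hB : ∀ a ∈ F, ¬ P a → f a ≤ B) :
    ∑ a ∈ F, f a ≤ A + F.card • B := by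
  by_cases h : ∃ a ∈ F, P a
  · obtain ⟨a, ha, hPa⟩ := h
    rw [← Finset.add_sum_erase F f ha]
    gcongr
    · exact hA a ha
    · calc ∑ b ∈ F.erase a, f b ≤ ∑ _ ∈ F.erase a, B :=
            Finset.sum_le_sum fun b hb => hB b (Finset.mem_of_mem_erase hb)
              fun hPb => Finset.ne_of_mem_erase hb
                (hP b (Finset.mem_of_mem_erase hb) a ha hPb hPa)
        _ ≤ F.card • B := by
            rw [Finset.sum_const]; exact nsmul_le_nsmul_left zero_le (Finset.card_erase_le)
  · push Not at h
    calc ∑ a ∈ F, f a ≤ ∑ _ ∈ F, B := Finset.sum_le_sum fun a ha => hB a ha (h a ha)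
      _ ≤ A + F.card • B := by rw [Finset.sum_const]; exact le_add_self

def pathCountBound (k d m : ℕ) : ℕ := ∑ i ∈ Finset.range m, d.choose i * k ^ i

theorem pathCountBound_zero_succ (k m : ℕ) : pathCountBound k 0 (m + 1) = 1 := by
  simp [pathCountBound, Finset.sum_range_succ', Nat.choose_zero_succ]

theorem pathCountBound_succ_succ (k d m : ℕ) :
    pathCountBound k (d + 1) (m + 1) =
      pathCountBound k d (m + 1) + k * pathCountBound k d m := by
  have hk : k * pathCountBound k d m = ∑ i ∈ Finset.range m, d.choose i * k ^ (i + 1) := by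
    rw [pathCountBound, Finset.mul_sum]
    exact Finset.sum_congr rfl fun i _ => by ring
  rw [hk, pathCountBound, pathCountBound, Finset.sum_range_succ' _ m, Finset.sum_range_succ' _ m]
  simp only [Nat.choose_succ_succ, add_mul, Finset.sum_add_distrib, Nat.choose_zero_right]
  ring

theorem pathCountBound_succ_le (k d m : ℕ) : pathCountBound k d (m + 1) ≤ (k * d + 1) ^ m := by
  rw [add_pow, pathCountBound]
  refine Finset.sum_le_sum fun i hi => ?_
  have hi : 1 ≤ m.choose i := Nat.choose_pos (by simpa [Nat.lt_succ_iff] using hi)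
  calc d.choose i * k ^ i ≤ (k * d) ^ i := by
        rw [mul_pow, mul_comm]; exact Nat.mul_le_mul_left _ (Nat.choose_le_pow d i)
    _ ≤ (k * d) ^ i * 1 ^ (m - i) * m.choose i := by simpa using Nat.le_mul_of_pos_right _ hi

theorem le_mul_log_of_two_pow_le {d m N : ℕ} (hmN : m ≤ N)
    (h : 2 ^ d ≤ ((N + 1) * d + 1) ^ m) : (d : ℝ) ≤ 12 * m * Real.log (N + 2) := by
  rcases Nat.eq_zero_or_pos m with rfl | hm
  · have : d < 1 := Nat.lt_two_pow_self.trans_le (by simpa using h)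
    simp [Nat.lt_one_iff.1 this]
  set L := Real.log (N + 2)
  have hm1 : (1 : ℝ) ≤ m := by exact_mod_cast hm
  have hmN' : (m : ℝ) ≤ N := by exact_mod_cast hmN
  have hlog2 : (1 / 2 : ℝ) < Real.log 2 := by linarith [Real.log_two_gt_d9]
  have hpow : d * Real.log 2 ≤ m * Real.log ((N + 1) * d + 1) := by
    have := Real.log_le_log (by positivity)
      (by exact_mod_cast h : (2 : ℝ) ^ d ≤ ((N + 1) * d + 1) ^ m)
    rwa [Real.log_pow, Real.log_pow] at this
  have hsplit : Real.log ((N + 1) * d + 1) ≤ L + Real.log (d + 1) := by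
    rw [← Real.log_mul (by positivity) (by positivity)]
    exact Real.log_le_log (by positivity) (by nlinarith)
  -- `log x ≤ x - 1` at `x = (d + 1) / 4m` absorbs `m log (d + 1)` into `d / 4`
  have hd1 : m * Real.log (d + 1) ≤ (d + 1) / 4 + m * Real.log (4 * m) - m := by
    have := Real.log_le_sub_one_of_pos (x := (d + 1) / (4 * m)) (by positivity)
    rw [Real.log_div (by positivity) (by positivity)] at this
    have := mul_le_mul_of_nonneg_left this (by positivity : (0 : ℝ) ≤ m)
    have hm4 : (m : ℝ) * ((d + 1) / (4 * m)) = (d + 1) / 4 := by field_simp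
    nlinarith
  have h4m : Real.log (4 * m) ≤ 2 * L := by
    calc Real.log (4 * m) ≤ Real.log ((N + 2) ^ 2) :=
          Real.log_le_log (by positivity) (by nlinarith)
      _ = 2 * L := by rw [Real.log_pow]; norm_num [L]
  nlinarith

def walk (br : List Bool → Y → Bool) : List Bool → List Y → List Bool
  | _, [] => []
  | p, v :: vs => br p v :: walk br (p ++ [br p v]) vs

theorem walk_length (br : List Bool → Y → Bool) (p : List Bool) (l : List Y) :
    (walk br p l).length = l.length := by
  induction l generalizing p with
  | nil => rfl
  | cons v vs ih => simp [walk, ih]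

theorem walk_take (br : List Bool → Y → Bool) (t : ℕ) (p : List Bool) (l : List Y) :
    walk br p (l.take t) = (walk br p l).take t := by
  induction t generalizing p l with
  | zero => simp [walk]
  | succ t ih => cases l <;> simp [walk, ih]

theorem walk_ofFn_eq_ofFn_iff (br : List Bool → Y → Bool) {d : ℕ} (p : List Bool)
    (y : Fin d → Y) (σ : Fin d → Bool) :
    walk br p (List.ofFn y) = List.ofFn σ ↔
      ∀ t : Fin d, σ t = br (p ++ (List.ofFn σ).take t) (y t) := by
  induction d generalizing p with
  | zero => simp [walk]
  | succ d ih =>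
    rw [List.ofFn_succ, List.ofFn_succ, walk, List.cons_eq_cons, Fin.forall_fin_succ,
      eq_comm]
    simp only [List.append_nil, List.take_zero, Fin.val_zero, Fin.val_succ, List.take_succ_cons]
    refine and_congr_right fun h0 => ?_
    rw [← h0, ih]
    simp

theorem walk_take_ofFn {br : List Bool → Y → Bool} {d : ℕ} {y : Fin d → Y}
    {σ : Fin d → Bool}
    (h : ∀ t : Fin d, σ t = br ((List.ofFn σ).take t) (y t)) (t : ℕ) :
    walk br [] ((List.ofFn y).take t) = (List.ofFn σ).take t := by
  rw [walk_take, (walk_ofFn_eq_ofFn_iff br [] y σ).2 (by simpa using h)]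

def joinAtRoot {α : Type*} (a : α) (c : Bool → List Bool → α) : List Bool → α
  | [] => a
  | b :: q => c b q

theorem LShatteredDepth.mono {V W : Set (X → Y)} (hVW : V ⊆ W) {d : ℕ}
    (h : LShatteredDepth V d) : LShatteredDepth W d := by
  obtain ⟨Tr, e, hdist, hpath⟩ := h
  refine ⟨Tr, e, hdist, fun σ => ?_⟩
  obtain ⟨f, hf, hfσ⟩ := hpath σ
  exact ⟨f, hVW hf, hfσ⟩

theorem LShatteredDepth.zero {V : Set (X → Y)} (hV : V.Nonempty) (x : X) :
    LShatteredDepth V 0 :=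
  ⟨fun _ => x, fun _ _ => hV.some x, by simp, fun _ => ⟨hV.some, hV.some_mem, Fin.elim0⟩⟩

theorem LShatteredDepth.succ {V : Set (X → Y)} {x : X} {y : Bool → Y} (hy : y false ≠ y true)
    {m : ℕ} (h : ∀ b, LShatteredDepth {f ∈ V | f x = y b} m) :
    LShatteredDepth V (m + 1) := by
  choose T e hdist hpath using h
  refine ⟨joinAtRoot x T, joinAtRoot y e, ?_, fun σ => ?_⟩
  · rintro (_ | ⟨b, q⟩) hq
    · exact hy
    · exact hdist b q (by simpa using hq)
  · obtain ⟨f, ⟨hfV, hfx⟩, hf⟩ := hpath (σ 0) (Fin.tail σ)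
    refine ⟨f, hfV, Fin.cases hfx fun t => ?_⟩
    simp only [Fin.val_succ, List.ofFn_succ, List.take_succ_cons, joinAtRoot]
    exact hf t

theorem LShatteredDepth.succ_of_ne {V : Set (X → Y)} {x : X} {y₀ y₁ : Y} (hy : y₀ ≠ y₁)
    {m : ℕ} (h₀ : LShatteredDepth {f ∈ V | f x = y₀} m)
    (h₁ : LShatteredDepth {f ∈ V | f x = y₁} m) : LShatteredDepth V (m + 1) :=
  LShatteredDepth.succ (y := fun b => cond b y₁ y₀) hy (Bool.forall_bool.2 ⟨h₀, h₁⟩)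

theorem le_Ldim {V : Set (X → Y)} {d : ℕ} (h : LShatteredDepth V d) : (d : ℕ∞) ≤ Ldim V :=
  le_iSup₂ (f := fun d (_ : d ∈ {d | LShatteredDepth V d}) => (d : ℕ∞)) d h

theorem le_BLdim {V : Set (X → Y)} {d : ℕ} (h : BLShatteredDepth V d) :
    (d : ℕ∞) ≤ BLdim V :=
  le_iSup₂ (f := fun d (_ : d ∈ {d | BLShatteredDepth V d}) => (d : ℕ∞)) d h

theorem not_LShatteredDepth_toNat_succ {V : Set (X → Y)} (hV : Ldim V ≠ ⊤) :
    ¬ LShatteredDepth V ((Ldim V).toNat + 1) := fun h => by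
  have := (le_Ldim h).trans_eq (ENat.natCast_toNat hV).symm
  norm_cast at this
  omega

theorem Ldim_ne_top_and_toNat_le {V : Set (X → Y)} {R : ℝ} (hR : 0 ≤ R)
    (h : ∀ d, LShatteredDepth V d → (d : ℝ) ≤ R) :
    Ldim V ≠ ⊤ ∧ ((Ldim V).toNat : ℝ) ≤ R := by
  have hle : Ldim V ≤ ⌊R⌋₊ := iSup₂_le fun d hd => by exact_mod_cast Nat.le_floor (h d hd)
  have hne : Ldim V ≠ ⊤ := ne_top_of_le_ne_top (ENat.natCast_ne_top _) hle
  refine ⟨hne, le_trans ?_ (Nat.floor_le hR)⟩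
  exact_mod_cast (ENat.toNat_le_toNat hle (ENat.natCast_ne_top _)).trans_eq (ENat.toNat_natCast _)

theorem BLShatteredDepth.of_LShatteredDepth {H : Set (X → Y)} {d : ℕ}
    (h : LShatteredDepth H d) : BLShatteredDepth H d := by
  obtain ⟨Tr, e, hdist, hpath⟩ := h
  -- a label equal to the `false`-edge label is avoided by moving to the `true` child
  let br : List Bool → Y → Bool := fun p v => decide (v = e p false)
  refine ⟨fun l => Tr (walk br [] l), fun y => ?_⟩
  obtain ⟨σ, hσ⟩ : ∃ σ : Fin d → Bool, List.ofFn σ = walk br [] (List.ofFn y) :=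
    ⟨fun t => (walk br [] (List.ofFn y))[t.1]'(by simp [walk_length]),
      List.ext_getElem (by simp [walk_length]) (by simp)⟩
  have hbr : ∀ t, σ t = br ((List.ofFn σ).take t) (y t) := by
    simpa using (walk_ofFn_eq_ofFn_iff br [] y σ).1 hσ.symm
  obtain ⟨f, hf, hfσ⟩ := hpath σ
  refine ⟨f, hf, fun t => ?_⟩
  have hlen : ((List.ofFn σ).take t).length < d := by simp
  simp only [walk_take_ofFn hbr, hfσ t, hbr t, br]
  by_cases hyt : y t = e ((List.ofFn σ).take t) false
  · simpa [hyt] using (hdist _ hlen).symm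
  · simpa [hyt] using Ne.symm hyt

theorem Ldim_le_BLdim (H : Set (X → Y)) : Ldim H ≤ BLdim H :=
  iSup₂_le fun _ hd => le_BLdim (BLShatteredDepth.of_LShatteredDepth hd)

theorem BLShatteredDepth.of_lt_encard_proj {H : Set (X → Y)} {x : X} {d : ℕ}
    (h : (d : ℕ∞) < (proj H x).encard) : BLShatteredDepth H d := by
  refine ⟨fun _ => x, fun y => ?_⟩
  have hrange : (Set.range y).encard ≤ d := by
    simpa using Set.encard_image_le y Set.univ
  obtain ⟨_, ⟨f, hf, rfl⟩, hfy⟩ :=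
    Set.not_subset.1 fun hsub => (hrange.trans_lt h).not_ge (Set.encard_le_encard hsub)
  exact ⟨f, hf, fun t hft => hfy ⟨t, hft.symm⟩⟩

theorem encard_proj_le {H : Set (X → Y)} (hH : BLdim H ≠ ⊤) (x : X) :
    (proj H x).encard ≤ ((BLdim H).toNat + 1 : ℕ) := by
  by_contra! h
  have := (le_BLdim (BLShatteredDepth.of_lt_encard_proj h)).trans_eq
    (ENat.natCast_toNat hH).symm
  norm_cast at this
  omega

theorem proj_mono {V W : Set (X → Y)} (hVW : V ⊆ W) (x : X) : proj V x ⊆ proj W x :=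
  fun _ ⟨f, hf, hfx⟩ => ⟨f, hVW hf, hfx⟩

def pathSet (V : Set (X → Y)) (T : List Y → X) (d : ℕ) : Set (Fin d → Y) :=
  {y | ∃ h ∈ V, ∀ t : Fin d, h (T ((List.ofFn y).take t.1)) = y t}

theorem pathSet_eq_empty {V : Set (X → Y)} (hV : ¬ LShatteredDepth V 0) (T : List Y → X)
    (d : ℕ) : pathSet V T d = ∅ :=
  Set.eq_empty_of_forall_notMem fun _ ⟨f, hf, _⟩ => hV (LShatteredDepth.zero ⟨f, hf⟩ (T []))

theorem pathSet_succ_subset (V : Set (X → Y)) (T : List Y → X) (d : ℕ) :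
    pathSet V T (d + 1) ⊆ ⋃ y ∈ proj V (T []),
      Fin.cons y '' pathSet {f ∈ V | f (T []) = y} (fun l => T (y :: l)) d := by
  rintro z ⟨f, hf, hz⟩
  have h0 : f (T []) = z 0 := hz 0
  refine Set.mem_biUnion ⟨f, hf, h0⟩
    ⟨Fin.tail z, ⟨f, ⟨hf, h0⟩, fun t => ?_⟩, Fin.cons_self_tail z⟩
  have := hz t.succ
  simp only [Fin.val_succ, List.ofFn_succ, List.take_succ_cons] at this
  exact this

theorem encard_pathSet_le {k : ℕ} (d : ℕ) {m : ℕ} {V : Set (X → Y)}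
    (hk : ∀ x, (proj V x).encard ≤ k) (hm : ¬ LShatteredDepth V m) (T : List Y → X) :
    (pathSet V T d).encard ≤ pathCountBound k d m := by
  induction d generalizing m V T with
  | zero =>
    rcases m with _ | m
    · simp [pathSet_eq_empty hm]
    · rw [pathCountBound_zero_succ, Nat.cast_one, Set.encard_le_one_iff]
      exact fun _ _ _ _ => funext fun i => i.elim0
  | succ d ih =>
    rcases m with _ | m
    · simp [pathSet_eq_empty hm]
    let W : Y → Set (X → Y) := fun y => {f ∈ V | f (T []) = y}
    have hkW (y : Y) (x : X) : (proj (W y) x).encard ≤ k :=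
      (Set.encard_le_encard (proj_mono (fun _ hf => hf.1) x)).trans (hk x)
    have hfin : (proj V (T [])).Finite := Set.finite_of_encard_le_coe (hk (T []))
    have hcard : (hfin.toFinset.card : ℕ∞) ≤ k :=
      hfin.encard_eq_coe_toFinset_card ▸ hk (T [])
    have hunique : ∀ a ∈ hfin.toFinset, ∀ b ∈ hfin.toFinset,
        LShatteredDepth (W a) m → LShatteredDepth (W b) m → a = b :=
      fun a _ b _ ha hb => by_contra fun hab => hm (LShatteredDepth.succ_of_ne hab ha hb)
    calc (pathSet V T (d + 1)).encard
        ≤ ∑ y ∈ hfin.toFinset, (pathSet (W y) (fun l => T (y :: l)) d).encard := by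
          have hsub := pathSet_succ_subset V T d
          rw [← hfin.coe_toFinset] at hsub
          refine (Set.encard_le_encard hsub).trans ?_
          refine (Finset.set_encard_biUnion_le _ _).trans ?_
          exact Finset.sum_le_sum fun y _ => Set.encard_image_le _ _
      _ ≤ pathCountBound k d (m + 1) + hfin.toFinset.card • pathCountBound k d m :=
          Finset.sum_le_add_card_nsmul_of_subsingleton hunique
            (fun y _ => ih (hkW y) (fun h => hm (h.mono fun _ hf => hf.1)) _)
            (fun y _ h => ih (hkW y) h _)
      _ ≤ pathCountBound k d (m + 1) + k * pathCountBound k d m := by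
          rw [nsmul_eq_mul]; gcongr
      _ = pathCountBound k (d + 1) (m + 1) := by
          rw [pathCountBound_succ_succ]; push_cast; ring

theorem exists_two_pow_le_encard_pathSet {H : Set (X → Y)} {d : ℕ}
    (hH : LShatteredDepth (lossClass H) d) :
    ∃ T : List Y → X, (2 ^ d : ℕ∞) ≤ (pathSet H T d).encard := by
  obtain ⟨Tr, e, hdist, hpath⟩ := hH
  choose g hg hgσ using hpath
  choose h hhH hgh using hg
  let label (σ : Fin d → Bool) (t : Fin d) : Y := h σ (Tr ((List.ofFn σ).take t)).1
  -- the loss incurred by a label at node `p` selects the child of `p` carrying that loss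
  let br : List Bool → Y → Bool := fun p v => decide ((v ≠ (Tr p).2) ≠ e p false)
  have hbr (σ : Fin d → Bool) (t : Fin d) :
      σ t = br ((List.ofFn σ).take t) (label σ t) := by
    have hloss := hgσ σ t
    have hlen : ((List.ofFn σ).take t).length < d := by simp
    simp only [hgh σ] at hloss
    simp only [br, label, hloss]
    cases σ t
    · simp
    · simpa using (hdist _ hlen).symm
  have hwalk (σ : Fin d → Bool) : walk br [] (List.ofFn (label σ)) = List.ofFn σ :=
    (walk_ofFn_eq_ofFn_iff br [] _ _).2 (by simpa using hbr σ)
  have hinj : Function.Injective label := fun σ τ hστ =>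
    List.ofFn_injective (by rw [← hwalk σ, ← hwalk τ, hστ])
  refine ⟨fun l => (Tr (walk br [] l)).1, ?_⟩
  calc (2 ^ d : ℕ∞) = (Set.univ : Set (Fin d → Bool)).encard := by simp
    _ ≤ (pathSet H _ d).encard :=
      Set.encard_le_encard_of_injOn
        (fun σ _ => ⟨h σ, hhH σ, fun t => by simp only [walk_take_ofFn (hbr σ), label]⟩)
        hinj.injOn

theorem le_mul_log_of_LShatteredDepth_lossClass {H : Set (X → Y)} (hH : BLdim H ≠ ⊤) {d : ℕ}
    (hd : LShatteredDepth (lossClass H) d) :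
    (d : ℝ) ≤ 12 * (Ldim H).toNat * Real.log ((BLdim H).toNat + 2) := by
  have hL : Ldim H ≠ ⊤ := ne_top_of_le_ne_top hH (Ldim_le_BLdim H)
  obtain ⟨T, hT⟩ := exists_two_pow_le_encard_pathSet hd
  have hcount := encard_pathSet_le d (encard_proj_le hH) (not_LShatteredDepth_toNat_succ hL) T
  refine le_mul_log_of_two_pow_le (ENat.toNat_le_toNat (Ldim_le_BLdim H) hH) ?_
  exact_mod_cast hT.trans (hcount.trans (Nat.cast_le.2 (pathCountBound_succ_le _ _ _)))

/-- If `BL(H) < ∞` then `SG(H) = O(L(H) · log BL(H))` (with a universal constant);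
in particular finiteness of `BL(H)` implies finiteness of `SG(H)`. -/
theorem stmt4 : ∃ c : ℝ, 0 < c ∧
    ∀ (X : Type u) (Y : Type v) (H : Set (X → Y)), BLdim H ≠ ⊤ →
      SGdim H ≠ ⊤ ∧
      ((SGdim H).toNat : ℝ) ≤
        c * ((Ldim H).toNat : ℝ) * Real.log (((BLdim H).toNat : ℝ) + 2) :=
  ⟨12, by norm_num, fun _ _ _ hH =>
    Ldim_ne_top_and_toNat_le
      (mul_nonneg (by positivity) (Real.log_nonneg (by norm_cast; omega)))
      fun _ => le_mul_log_of_LShatteredDepth_lossClass hH⟩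
end

section
/- Let X = ℕ, Y = ℕ, and H = { h_a : a ∈ ℕ } where h_a(x) = a for all x. Then L(H) = 1, SG(H) = 1, and BL(H) = ∞. -/
open scoped Classical

variable {X : Type*} {Y : Type*}

/-!
A constant hypothesis is determined by its value at any single point. In a Littlestone tree of
depth two, the realizers of the two paths through one child of the root agree at the root, hence
coincide, and so cannot separate the two edges below that child. For the loss class the same
argument runs through the root edge labelled by a false proposition: its realizers have zero loss
at the root, so they predict the root's label and are again equal. Depth one is shattered by any
two distinct constants. In the bandit tree, finitely many forbidden labels along a path are avoided
by a constant outside them, so every depth is shattered.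
-/

section

variable {H : Set (X → Y)}

theorem LShattered.exists_eq_root_ne {d : ℕ} {Tr : List Bool → X} {e : List Bool → Bool → Y}
    (hs : LShattered H (d + 2) Tr e) (c : Bool) :
    ∃ h₀ ∈ H, ∃ h₁ ∈ H, h₀ (Tr []) = e [] c ∧ h₁ (Tr []) = e [] c ∧
      h₀ (Tr [c]) ≠ h₁ (Tr [c]) := by
  have realize : ∀ b : Bool, ∃ h ∈ H, h (Tr []) = e [] c ∧ h (Tr [c]) = e [c] b := by
    intro b
    obtain ⟨h, hH, hpath⟩ := hs.2 (Fin.cons c (Fin.cons b fun _ => c))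
    exact ⟨h, hH, by simpa using hpath 0, by simpa using hpath 1⟩
  obtain ⟨h₀, h₀H, h₀root, h₀c⟩ := realize false
  obtain ⟨h₁, h₁H, h₁root, h₁c⟩ := realize true
  exact ⟨h₀, h₀H, h₁, h₁H, h₀root, h₁root, h₀c ▸ h₁c ▸ hs.1 [c] (by simp)⟩

theorem LShatteredDepth.le_one_of_injOn (hinj : ∀ x, Set.InjOn (fun h : X → Y => h x) H)
    {d : ℕ} (hd : LShatteredDepth H d) : d ≤ 1 := by
  obtain ⟨Tr, e, hs⟩ := hd
  by_contra! hlt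
  obtain ⟨n, rfl⟩ := Nat.exists_eq_add_of_le' hlt
  obtain ⟨h₀, h₀H, h₁, h₁H, h₀root, h₁root, hne⟩ := hs.exists_eq_root_ne false
  exact hne (congrFun (hinj (Tr []) h₀H h₁H (h₀root.trans h₁root.symm)) _)

theorem LShatteredDepth.le_one_of_lossClass_of_injOn
    (hinj : ∀ x, Set.InjOn (fun h : X → Y => h x) H)
    {d : ℕ} (hd : LShatteredDepth (lossClass H) d) : d ≤ 1 := by
  obtain ⟨Tr, e, hs⟩ := hd
  by_contra! hlt
  obtain ⟨n, rfl⟩ := Nat.exists_eq_add_of_le' hlt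
  obtain ⟨c, hc⟩ : ∃ c, ¬ e [] c := by
    by_contra! htrue
    exact hs.1 [] (by simp) (propext (iff_of_true (htrue false) (htrue true)))
  obtain ⟨_, ⟨h₀, h₀H, rfl⟩, _, ⟨h₁, h₁H, rfl⟩, h₀root, h₁root, hne⟩ :=
    hs.exists_eq_root_ne c
  have predicts : ∀ h : X → Y, (h (Tr []).1 ≠ (Tr []).2) = e [] c → h (Tr []).1 = (Tr []).2 :=
    fun h hloss => not_not.mp fun hwrong => hc (hloss ▸ hwrong)
  obtain rfl := hinj _ h₀H h₁H ((predicts h₀ h₀root).trans (predicts h₁ h₁root).symm)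
  exact hne rfl

theorem lShatteredDepth_one_of_ne {h₀ h₁ : X → Y} (h₀H : h₀ ∈ H) (h₁H : h₁ ∈ H) {x : X}
    (hx : h₀ x ≠ h₁ x) : LShatteredDepth H 1 := by
  refine ⟨fun _ => x, fun _ b => cond b (h₁ x) (h₀ x), fun _ _ => hx, fun σ => ?_⟩
  refine ⟨cond (σ 0) h₁ h₀, by cases σ 0 <;> assumption, fun t => ?_⟩
  rw [Subsingleton.elim t 0]
  cases σ 0 <;> rfl

theorem Ldim_eq_one_of_forall_le_one (hle : ∀ d, LShatteredDepth H d → d ≤ 1)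
    (hone : LShatteredDepth H 1) : Ldim H = 1 :=
  le_antisymm (iSup₂_le fun d hd => by exact_mod_cast hle d hd)
    (le_iSup₂ (f := fun (d : ℕ) _ => (d : ℕ∞)) 1 hone)

theorem Ldim_eq_one_of_injOn (hinj : ∀ x, Set.InjOn (fun h : X → Y => h x) H)
    {h₀ h₁ : X → Y} (h₀H : h₀ ∈ H) (h₁H : h₁ ∈ H) {x : X} (hx : h₀ x ≠ h₁ x) : Ldim H = 1 :=
  Ldim_eq_one_of_forall_le_one (fun _ hd => hd.le_one_of_injOn hinj)
    (lShatteredDepth_one_of_ne h₀H h₁H hx)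

theorem SGdim_eq_one_of_injOn (hinj : ∀ x, Set.InjOn (fun h : X → Y => h x) H)
    {h₀ h₁ : X → Y} (h₀H : h₀ ∈ H) (h₁H : h₁ ∈ H) {x : X} (hx : h₀ x ≠ h₁ x) : SGdim H = 1 :=
  Ldim_eq_one_of_forall_le_one (fun _ hd => hd.le_one_of_lossClass_of_injOn hinj)
    (lShatteredDepth_one_of_ne (x := (x, h₀ x)) ⟨h₀, h₀H, rfl⟩ ⟨h₁, h₁H, rfl⟩
      (by simpa using hx.symm))

theorem blShattered_of_const_mem [Infinite Y] (hH : ∀ a : Y, (fun _ => a) ∈ H) (d : ℕ)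
    (Tr : List Y → X) : BLShattered H d Tr := fun y => by
  obtain ⟨a, ha⟩ := (Set.finite_range y).exists_notMem
  exact ⟨fun _ => a, hH a, fun t hat => ha ⟨t, hat.symm⟩⟩

theorem BLdim_eq_top_of_const_mem [Nonempty X] [Infinite Y] (hH : ∀ a : Y, (fun _ => a) ∈ H) :
    BLdim H = ⊤ :=
  ENat.eq_top_iff_forall_ge.mpr fun d =>
    le_iSup₂ (f := fun (d : ℕ) _ => (d : ℕ∞)) d
      ⟨fun _ => Classical.arbitrary X, blShattered_of_const_mem hH d _⟩

end

/-- For the class of all constant functions `ℕ → ℕ`: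
`L(H) = 1`, `SG(H) = 1`, and `BL(H) = ∞`. -/
theorem stmt6 :
    Ldim {f : ℕ → ℕ | ∃ a : ℕ, f = fun _ => a} = 1 ∧
    SGdim {f : ℕ → ℕ | ∃ a : ℕ, f = fun _ => a} = 1 ∧
    BLdim {f : ℕ → ℕ | ∃ a : ℕ, f = fun _ => a} = ⊤ := by
  have hinj : ∀ x, Set.InjOn (fun h : ℕ → ℕ => h x) {f | ∃ a : ℕ, f = fun _ => a} := by
    rintro x _ ⟨a, rfl⟩ _ ⟨b, rfl⟩ (hab : a = b)
    rw [hab]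
  have hconst : ∀ a : ℕ, (fun _ => a) ∈ {f : ℕ → ℕ | ∃ a : ℕ, f = fun _ => a} := fun a => ⟨a, rfl⟩
  exact ⟨Ldim_eq_one_of_injOn hinj (hconst 0) (hconst 1) (x := 0) zero_ne_one,
    SGdim_eq_one_of_injOn hinj (hconst 0) (hconst 1) (x := 0) zero_ne_one,
    BLdim_eq_top_of_const_mem hconst⟩
end

section
/- Fix d ≥ 2 and labels y_1,...,y_d ∈ Y. Let Y* be chosen uniformly at random from {y_1,...,y_d}, and let a learner produce a sequence of (possibly random) guesses Ŷ_1, Ŷ_2, ..., where each Ŷ_t may depend only on the indicators 1{Ŷ_s ≠ Y*} for s < t (and independent internal randomness). Then the expected number of indices t ∈ [T] with Ŷ_t ≠ Y* is at least (min{d, T} − 1)/2. -/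
open scoped Classical
open MeasureTheory

lemma aux_strictMono_le {k : ℕ} (f : Fin k → ℕ) (hf : StrictMono f) :
    ∀ n, ∀ h : n < k, n ≤ f ⟨n, h⟩ := by
  intro n
  induction n with
  | zero => intro h; exact Nat.zero_le _
  | succ m ih =>
    intro h
    have hm : m < k := Nat.lt_of_succ_lt h
    have h1 := ih hm
    have hlt : f ⟨m, hm⟩ < f ⟨m + 1, h⟩ := hf (by simp [Fin.lt_def])
    omega

lemma aux_sum_finset_nat (s : Finset ℕ) : ∑ j ∈ Finset.range s.card, j ≤ ∑ x ∈ s, x := by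
  classical
  set k := s.card with hk
  have hsum : ∑ x ∈ s, x = ∑ j : Fin k, s.orderEmbOfFin hk.symm j := by
    rw [← Finset.sum_attach s (fun x => x)]
    refine (Fintype.sum_equiv (s.orderIsoOfFin hk.symm).toEquiv _ _ ?_).symm
    intro j
    simp [Finset.coe_orderIsoOfFin_apply]
  rw [hsum, Finset.sum_range fun j => j]
  exact Finset.sum_le_sum fun j _ =>
    aux_strictMono_le _ (s.orderEmbOfFin hk.symm).strictMono j j.2

/-- Guessing a uniformly random label among `d ≥ 2` candidates under bandit
("wrong/right") feedback: any learner `A` whose guess at time `t` depends only on the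
past indicators (and internal randomness `ω`) makes, averaged over the uniformly random
target `y i`, at least `(min d T − 1)/2` expected mistakes in `T` rounds. -/
theorem stmt8 {Y : Type*} {Ω : Type*} [MeasurableSpace Ω]
    (μ : Measure Ω) [IsProbabilityMeasure μ]
    (d T : ℕ) (hd : 2 ≤ d) (y : Fin d → Y) (hy : Function.Injective y)
    (A : (t : ℕ) → (Fin t → Prop) → Ω → Y)
    (guess : ℕ → Fin d → Ω → Y)
    (hguess : ∀ (t : ℕ) (i : Fin d) (ω : Ω), guess t i ω =
      A t (fun s : Fin t => guess s.1 i ω ≠ y i) ω)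
    (hmeas : ∀ (t : ℕ) (i : Fin d),
      Measurable fun ω => (if guess t i ω ≠ y i then (1 : ℝ) else 0)) :
    ((min d T : ℝ) - 1) / 2 ≤
      (∑ i : Fin d, ∫ ω, (∑ t ∈ Finset.range T,
        if guess t i ω ≠ y i then (1 : ℝ) else 0) ∂μ) / d := by
  classical
  -- pointwise deterministic lower bound
  have key : ∀ ω : Ω, ((min d T : ℝ) - 1) / 2 * d ≤
      ∑ i : Fin d, ∑ t ∈ Finset.range T,
        (if guess t i ω ≠ y i then (1 : ℝ) else 0) := by
    intro ω
    set g : ℕ → Y := fun t => A t (fun _ => True) ω with hgdef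
    have hpath : ∀ (i : Fin d) (t : ℕ),
        (∀ s, s < t → guess s i ω ≠ y i) → guess t i ω = g t := by
      intro i t h
      rw [hguess]
      congr 1
      funext s
      exact eq_true (h s.1 s.2)
    have hmist : ∀ (i : Fin d) (t : ℕ), (∀ s, s < t → g s ≠ y i) →
        ∀ s, s < t → guess s i ω ≠ y i := by
      intro i t hgne s
      induction s using Nat.strong_induction_on with
      | _ s ih =>
        intro hs
        rw [hpath i s (fun s' hs' => ih s' hs' (hs'.trans hs))]
        exact hgne s hs
    set p : Fin d → Prop := fun i => ∃ t, t < T ∧ g t = y i with hpdef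
    set H : Finset (Fin d) := Finset.univ.filter p with hHdef
    set τ : Fin d → ℕ := fun i => if h : p i then Nat.find h else 0 with hτdef
    have hτspec : ∀ i, p i → τ i < T ∧ g (τ i) = y i := by
      intro i hi
      simp only [hτdef, dif_pos hi]
      exact Nat.find_spec hi
    have hτmin : ∀ i (hi : p i), ∀ s, s < τ i → g s ≠ y i := by
      intro i hi s hs
      have := Nat.find_min hi (by simpa [hτdef, dif_pos hi] using hs)
      intro hgs
      exact this ⟨hs.trans (hτspec i hi).1, hgs⟩
    set M : Fin d → ℕ :=
      fun i => ((Finset.range T).filter fun t => guess t i ω ≠ y i).card with hMdef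
    have hM1 : ∀ i, p i → τ i ≤ M i := by
      intro i hi
      have hsub : Finset.range (τ i) ⊆
          (Finset.range T).filter fun t => guess t i ω ≠ y i := by
        intro t ht
        rw [Finset.mem_range] at ht
        refine Finset.mem_filter.2 ⟨Finset.mem_range.2 (ht.trans (hτspec i hi).1), ?_⟩
        exact hmist i (τ i) (hτmin i hi) t ht
      simpa [hMdef] using Finset.card_le_card hsub
    have hM2 : ∀ i, ¬ p i → T ≤ M i := by
      intro i hi
      have hgne : ∀ s, s < T → g s ≠ y i := by
        intro s hs hgs
        exact hi ⟨s, hs, hgs⟩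
      have hsub : Finset.range T ⊆
          (Finset.range T).filter fun t => guess t i ω ≠ y i := by
        intro t ht
        exact Finset.mem_filter.2 ⟨ht, hmist i T hgne t (Finset.mem_range.1 ht)⟩
      simpa [hMdef] using Finset.card_le_card hsub
    have hinj : ∀ i ∈ H, ∀ j ∈ H, τ i = τ j → i = j := by
      intro i hi j hj hij
      have hi' : p i := (Finset.mem_filter.1 hi).2
      have hj' : p j := (Finset.mem_filter.1 hj).2
      apply hy
      rw [← (hτspec i hi').2, ← (hτspec j hj').2, hij]
    set k := H.card with hkdef
    have himg : (H.image τ).card = k := Finset.card_image_of_injOn hinj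
    have hkT : k ≤ T := by
      have hsub : H.image τ ⊆ Finset.range T := by
        intro x hx
        rcases Finset.mem_image.1 hx with ⟨i, hi, rfl⟩
        exact Finset.mem_range.2 (hτspec i (Finset.mem_filter.1 hi).2).1
      calc k = (H.image τ).card := himg.symm
        _ ≤ T := by simpa using Finset.card_le_card hsub
    have hkd : k ≤ d := by
      calc k ≤ Finset.univ.card := Finset.card_le_card (Finset.filter_subset _ _)
        _ = d := by simp
    -- lower bound on ∑ τ over H
    have hgauss : ∑ j ∈ Finset.range k, j ≤ ∑ i ∈ H, τ i := by
      have h1 : ∑ x ∈ H.image τ, x = ∑ i ∈ H, τ i := Finset.sum_image hinj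
      have h2 := aux_sum_finset_nat (H.image τ)
      rw [himg, h1] at h2
      exact h2
    -- total nat bound
    have hsplit : ∑ i ∈ H, τ i + (d - k) * T ≤ ∑ i : Fin d, M i := by
      have h1 : ∑ i : Fin d, M i =
          ∑ i ∈ Finset.univ.filter p, M i + ∑ i ∈ Finset.univ.filter (fun i => ¬ p i), M i :=
        (Finset.sum_filter_add_sum_filter_not _ _ _).symm
      have h2 : ∑ i ∈ H, τ i ≤ ∑ i ∈ Finset.univ.filter p, M i :=
        Finset.sum_le_sum fun i hi => hM1 i (Finset.mem_filter.1 hi).2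
      have hcard : (Finset.univ.filter (fun i => ¬ p i)).card = d - k := by
        have h := Finset.card_filter_add_card_filter_not (s := (Finset.univ : Finset (Fin d))) (p := p)
        simp only [Finset.card_univ, Fintype.card_fin] at h
        rw [hkdef, hHdef]
        omega
      have h3 : (d - k) * T ≤ ∑ i ∈ Finset.univ.filter (fun i => ¬ p i), M i := by
        calc (d - k) * T = ∑ _i ∈ Finset.univ.filter (fun i => ¬ p i), T := by
              rw [Finset.sum_const, hcard, smul_eq_mul]
          _ ≤ _ := Finset.sum_le_sum fun i hi => hM2 i (Finset.mem_filter.1 hi).2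
      omega
    have h2N : k * (k - 1) + 2 * ((d - k) * T) ≤ 2 * ∑ i : Fin d, M i := by
      have := Finset.sum_range_id_mul_two k
      omega
    -- move to ℝ
    have hMreal : ∑ i : Fin d, ∑ t ∈ Finset.range T,
        (if guess t i ω ≠ y i then (1 : ℝ) else 0) = ((∑ i : Fin d, M i : ℕ) : ℝ) := by
      have hMi : ∀ i : Fin d, (∑ t ∈ Finset.range T,
          if guess t i ω ≠ y i then (1 : ℝ) else 0) = (M i : ℝ) := by
        intro i
        rw [hMdef]
        simp only [Finset.sum_boole]
      rw [Finset.sum_congr rfl fun i _ => hMi i]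
      exact (Nat.cast_sum _ _).symm
    rw [hMreal]
    set N : ℕ := ∑ i : Fin d, M i with hNdef
    have hkd' : (k : ℝ) ≤ d := Nat.cast_le.2 hkd
    have hkT' : (k : ℝ) ≤ T := Nat.cast_le.2 hkT
    have hd' : (2 : ℝ) ≤ d := by exact_mod_cast hd
    have hreal : (k : ℝ) * ((k : ℝ) - 1) + 2 * (((d : ℝ) - k) * T) ≤ 2 * N := by
      have h1 : (k : ℝ) - 1 ≤ ((k - 1 : ℕ) : ℝ) := by
        rcases Nat.eq_zero_or_pos k with h | h
        · simp [h]
        · rw [Nat.cast_sub h]; simp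
      have h2 : ((d - k : ℕ) : ℝ) = (d : ℝ) - k := Nat.cast_sub hkd
      have h3 := (Nat.cast_le (α := ℝ)).2 h2N
      push_cast at h3
      rw [h2] at h3
      have h4 : (k : ℝ) * ((k : ℝ) - 1) ≤ (k : ℝ) * ((k - 1 : ℕ) : ℝ) :=
        mul_le_mul_of_nonneg_left h1 (Nat.cast_nonneg k)
      linarith
    rcases le_total (d : ℝ) (T : ℝ) with hdT | hTd
    · rw [min_eq_left hdT]
      have : (d : ℝ) * ((d : ℝ) - 1) ≤ 2 * N := by
        nlinarith [sq_nonneg ((d : ℝ) - k), sub_nonneg.2 hkd',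
          mul_le_mul_of_nonneg_left hdT (sub_nonneg.2 hkd')]
      linarith
    · rw [min_eq_right hTd]
      have hT0 : (0 : ℝ) ≤ (T : ℝ) := Nat.cast_nonneg T
      have : (d : ℝ) * ((T : ℝ) - 1) ≤ 2 * N := by
        nlinarith [sq_nonneg ((T : ℝ) - k), sub_nonneg.2 hkT',
          mul_nonneg (sub_nonneg.2 hTd) (by linarith : (0:ℝ) ≤ (T:ℝ) + 1)]
      linarith
  -- integration
  have hint : ∀ (t : ℕ) (i : Fin d),
      Integrable (fun ω => if guess t i ω ≠ y i then (1 : ℝ) else 0) μ := by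
    intro t i
    refine Integrable.mono' (integrable_const 1) (hmeas t i).aestronglyMeasurable ?_
    filter_upwards with ω
    split <;> simp
  have hfint : ∀ i : Fin d, Integrable (fun ω => ∑ t ∈ Finset.range T,
      (if guess t i ω ≠ y i then (1 : ℝ) else 0)) μ :=
    fun i => integrable_finset_sum _ fun t _ => hint t i
  have hsum : ∑ i : Fin d, ∫ ω, (∑ t ∈ Finset.range T,
      (if guess t i ω ≠ y i then (1 : ℝ) else 0)) ∂μ =
      ∫ ω, (∑ i : Fin d, ∑ t ∈ Finset.range T,
        (if guess t i ω ≠ y i then (1 : ℝ) else 0)) ∂μ :=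
    (integral_finset_sum _ fun i _ => hfint i).symm
  have hlb : ((min d T : ℝ) - 1) / 2 * d ≤
      ∑ i : Fin d, ∫ ω, (∑ t ∈ Finset.range T,
        (if guess t i ω ≠ y i then (1 : ℝ) else 0)) ∂μ := by
    rw [hsum]
    calc ((min d T : ℝ) - 1) / 2 * d
        = ∫ _ω, (((min d T : ℝ) - 1) / 2 * d) ∂μ := by simp
      _ ≤ _ := integral_mono (integrable_const _)
          (integrable_finset_sum _ fun i _ => hfint i) key
  have hdpos : (0 : ℝ) < d := by positivity
  rw [le_div_iff₀ hdpos]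
  exact hlb
end

section
/- If a class H ⊆ Y^X has sup_{x∈X} |H(x)| = ∞, then for every T, any online learner under bandit feedback suffers expected regret at least (T − 1)/2 on some realizable stream; hence H is not bandit online learnable. -/
open scoped Classical

variable {X : Type*} {Y : Type*}

open MeasureTheory Filter

/-- `P` is the family of predictions induced by the bandit algorithm `A`:
on a stream `(xs, ys)` of length `T`, the prediction at round `t` is computed by `A`
from the instances `x_1,…,x_{t+1}` seen so far and the past bandit feedback
`1{ŷ_s ≠ y_s}` for `s < t` (plus internal randomness `ω`). -/
def PredRec {X Y : Type*} {Ω : Type}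
    (A : (t : ℕ) → List X → (Fin t → Prop) → Ω → Y)
    (P : (T : ℕ) → (Fin T → X) → (Fin T → Y) → ℕ → Ω → Y) : Prop :=
  ∀ (T : ℕ) (xs : Fin T → X) (ys : Fin T → Y) (t : Fin T) (ω : Ω),
    P T xs ys t.1 ω =
      A t.1 ((List.ofFn xs).take (t.1 + 1))
        (fun s : Fin t.1 => P T xs ys s.1 ω ≠ ys ⟨s.1, s.isLt.trans t.isLt⟩) ω

/-- Expected number of mistakes of the (randomized) prediction family `P` on the
stream `(xs, ys)`. -/
noncomputable def ExpMistakes {X Y : Type*} {Ω : Type} [MeasurableSpace Ω]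
    (μ : Measure Ω) (P : (T : ℕ) → (Fin T → X) → (Fin T → Y) → ℕ → Ω → Y)
    (T : ℕ) (xs : Fin T → X) (ys : Fin T → Y) : ℝ :=
  ∑ t : Fin T, ∫ ω, (if P T xs ys t.1 ω ≠ ys t then (1 : ℝ) else 0) ∂μ

/-- Expected regret of `P` with respect to the class `H` on the stream `(xs, ys)`. -/
noncomputable def ExpRegret {X Y : Type*} {Ω : Type} [MeasurableSpace Ω]
    (μ : Measure Ω) (P : (T : ℕ) → (Fin T → X) → (Fin T → Y) → ℕ → Ω → Y)
    (H : Set (X → Y)) (T : ℕ) (xs : Fin T → X) (ys : Fin T → Y) : ℝ :=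
  ExpMistakes μ P T xs ys -
    ⨅ h : H, ∑ t : Fin T, (if (h : X → Y) (xs t) ≠ ys t then (1 : ℝ) else 0)

/-- `H` is online learnable under bandit feedback: some randomized algorithm
achieves expected regret at most `R T` on every stream of length `T`, with
`R` sublinear in `T`. -/
def BanditOnlineLearnable {X Y : Type*} (H : Set (X → Y)) : Prop :=
  ∃ (Ω : Type) (_ : MeasurableSpace Ω) (μ : Measure Ω) (_ : IsProbabilityMeasure μ)
    (A : (t : ℕ) → List X → (Fin t → Prop) → Ω → Y)
    (P : (T : ℕ) → (Fin T → X) → (Fin T → Y) → ℕ → Ω → Y),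
    PredRec A P ∧
    (∀ (T : ℕ) (xs : Fin T → X) (ys : Fin T → Y) (t : Fin T),
      Measurable fun ω => (if P T xs ys t.1 ω ≠ ys t then (1 : ℝ) else 0)) ∧
    ∃ R : ℕ → ℝ, Tendsto (fun T : ℕ => R T / T) atTop (nhds 0) ∧
      ∀ (T : ℕ) (xs : Fin T → X) (ys : Fin T → Y), ExpRegret μ P H T xs ys ≤ R T

theorem stmt10_main (H : Set (X → Y))
    (hsup : ∀ n : ℕ, ∃ x : X, (n : ℕ∞) ≤ (proj H x).encard) :
    (∀ (T : ℕ) (Ω : Type) (mΩ : MeasurableSpace Ω) (μ : Measure Ω),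
      IsProbabilityMeasure μ →
      ∀ (A : (t : ℕ) → List X → (Fin t → Prop) → Ω → Y)
        (P : (T : ℕ) → (Fin T → X) → (Fin T → Y) → ℕ → Ω → Y),
        PredRec A P →
        (∀ (T : ℕ) (xs : Fin T → X) (ys : Fin T → Y) (t : Fin T),
          Measurable fun ω => (if P T xs ys t.1 ω ≠ ys t then (1 : ℝ) else 0)) →
        ∃ (xs : Fin T → X) (h0 : X → Y), h0 ∈ H ∧
          ((T : ℝ) - 1) / 2 ≤ ExpRegret μ P H T xs (fun t => h0 (xs t))) := by
  intro T Ω mΩ μ hμ A P hrec hmeas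
  set d : ℕ := 2 * T * T + 1 with hd
  have hTd : T ≤ d := by
    rcases Nat.eq_zero_or_pos T with h | h
    · omega
    · have h1 : T ≤ T * T := Nat.le_mul_of_pos_left T h
      have h2 : 2 * T * T = 2 * (T * T) := by ring
      omega
  obtain ⟨x, hx⟩ := hsup d
  obtain ⟨S, hSsub, hScard⟩ := Set.exists_subset_encard_eq hx
  have hSfin : S.Finite := Set.finite_of_encard_eq_coe hScard
  set s : Finset Y := hSfin.toFinset with hs
  have hscard : s.card = d := by
    have := hSfin.encard_eq_coe_toFinset_card
    rw [hScard] at this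
    exact_mod_cast this.symm
  set xs : Fin T → X := fun _ => x with hxs
  set q : Ω → ℕ → Y :=
    fun ω t => A t ((List.ofFn xs).take (t + 1)) (fun _ : Fin t => True) ω with hq
  -- key: if y is never predicted under all-wrong feedback, predictions follow q
  have key : ∀ (y : Y) (ω : Ω), (∀ t, t < T → q ω t ≠ y) →
      ∀ n, ∀ _ : n < T, P T xs (fun _ => y) n ω = q ω n := by
    intro y ω hqy n
    induction n using Nat.strong_induction_on with
    | _ n ih =>
      intro hn
      rw [hrec T xs (fun _ => y) ⟨n, hn⟩ ω]
      have hfeed : (fun s : Fin n => P T xs (fun _ : Fin T => y) s.1 ω ≠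
          (fun _ : Fin T => y) ⟨s.1, s.isLt.trans hn⟩) = fun _ : Fin n => True := by
        funext sidx
        have h1 : P T xs (fun _ : Fin T => y) sidx.1 ω = q ω sidx.1 :=
          ih sidx.1 sidx.isLt (sidx.isLt.trans hn)
        simp only [h1]
        exact eq_true (hqy sidx.1 (sidx.isLt.trans hn))
      rw [hfeed]
  -- the indicator functions
  set ind : Y → Fin T → Ω → ℝ :=
    fun y t ω => if P T xs (fun _ : Fin T => y) t.1 ω ≠ y then (1 : ℝ) else 0 with hind
  have hint : ∀ (y : Y) (t : Fin T), Integrable (ind y t) μ := by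
    intro y t
    refine (integrable_const (1 : ℝ)).mono' ?_ ?_
    · exact (hmeas T xs (fun _ => y) t).aestronglyMeasurable
    · filter_upwards with ω
      simp only [hind]
      split_ifs <;> simp
  have hindnn : ∀ (y : Y) (t : Fin T) (ω : Ω), 0 ≤ ind y t ω := by
    intro y t ω; simp only [hind]; split_ifs <;> norm_num
  -- pointwise counting bound
  have count : ∀ ω : Ω, ((d : ℝ) - T) * T ≤ ∑ y ∈ s, ∑ t : Fin T, ind y t ω := by
    intro ω
    set B : Finset Y := (Finset.range T).image (q ω) with hB
    have hBcard : B.card ≤ T := le_trans Finset.card_image_le (by simp)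
    have hgood : ∀ y ∈ s \ B, ∑ t : Fin T, ind y t ω = T := by
      intro y hy
      obtain ⟨hys, hyB⟩ := Finset.mem_sdiff.mp hy
      have hqy : ∀ t, t < T → q ω t ≠ y := by
        intro t ht h
        exact hyB (Finset.mem_image.mpr ⟨t, Finset.mem_range.mpr ht, h⟩)
      have : ∀ t : Fin T, ind y t ω = 1 := by
        intro t
        have h1 := key y ω hqy t.1 t.isLt
        simp only [hind, h1, if_pos (hqy t.1 t.isLt)]
      simp [this]
    have hcard : (d : ℝ) - T ≤ ((s \ B).card : ℝ) := by
      have h1 : d - T ≤ (s \ B).card := by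
        calc d - T ≤ s.card - B.card := by omega
          _ ≤ (s \ B).card := Finset.le_card_sdiff B s
      calc (d : ℝ) - T = ((d - T : ℕ) : ℝ) := by
            rw [Nat.cast_sub hTd]
        _ ≤ ((s \ B).card : ℝ) := by exact_mod_cast h1
    calc ((d : ℝ) - T) * T ≤ ((s \ B).card : ℝ) * T := by
          apply mul_le_mul_of_nonneg_right hcard (by positivity)
      _ = ∑ y ∈ s \ B, ∑ t : Fin T, ind y t ω := by
          rw [Finset.sum_congr rfl hgood, Finset.sum_const, nsmul_eq_mul]
      _ ≤ ∑ y ∈ s, ∑ t : Fin T, ind y t ω := by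
          apply Finset.sum_le_sum_of_subset_of_nonneg (Finset.sdiff_subset)
          intro y _ _
          exact Finset.sum_nonneg fun t _ => hindnn y t ω
  -- expected total mistakes bound
  have hEM : ∀ y : Y, ExpMistakes μ P T xs (fun _ => y) = ∑ t : Fin T, ∫ ω, ind y t ω ∂μ := by
    intro y; rfl
  have hsum : ((d : ℝ) - T) * T ≤ ∑ y ∈ s, ExpMistakes μ P T xs (fun _ => y) := by
    have h1 : ∑ y ∈ s, ExpMistakes μ P T xs (fun _ => y)
        = ∫ ω, ∑ y ∈ s, ∑ t : Fin T, ind y t ω ∂μ := by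
      rw [integral_finset_sum s (fun y _ => integrable_finset_sum _ (fun t _ => hint y t))]
      refine Finset.sum_congr rfl fun y _ => ?_
      rw [hEM y, integral_finset_sum Finset.univ (fun t _ => hint y t)]
    rw [h1]
    calc ((d : ℝ) - T) * T = ∫ _ω, ((d : ℝ) - T) * T ∂μ := by simp
      _ ≤ ∫ ω, ∑ y ∈ s, ∑ t : Fin T, ind y t ω ∂μ :=
          integral_mono (integrable_const _)
            (integrable_finset_sum _ fun y _ => integrable_finset_sum _ fun t _ => hint y t)
            count
  -- pigeonhole
  have hd0 : (0 : ℝ) < d := by positivity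
  have hne : s.Nonempty := Finset.card_pos.mp (by omega)
  obtain ⟨y, hys, hley⟩ := Finset.exists_le_of_sum_le hne
    (show ∑ _y ∈ s, (((d : ℝ) - T) * T / d) ≤ ∑ y ∈ s, ExpMistakes μ P T xs (fun _ => y) by
      rw [Finset.sum_const, hscard, nsmul_eq_mul, mul_div_cancel₀ _ (ne_of_gt hd0)]
      exact hsum)
  -- get hypothesis realizing y
  have hyS : y ∈ S := hSfin.mem_toFinset.mp hys
  obtain ⟨h0, h0H, h0x⟩ := hSsub hyS
  refine ⟨xs, h0, h0H, ?_⟩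
  have hysfun : (fun t => h0 (xs t)) = (fun _ : Fin T => y) := by
    funext t; simp [hxs, h0x]
  rw [hysfun]
  have hinf : (⨅ h : H, ∑ t : Fin T,
      (if (h : X → Y) (xs t) ≠ (fun _ : Fin T => y) t then (1 : ℝ) else 0)) = 0 := by
    apply le_antisymm
    · refine ciInf_le_of_le ?_ (⟨h0, h0H⟩ : H) ?_
      · refine ⟨0, ?_⟩
        rintro r ⟨h, rfl⟩
        exact Finset.sum_nonneg fun t _ => by positivity
      · simp [hxs, h0x]
    · exact Real.iInf_nonneg fun h => Finset.sum_nonneg fun t _ => by positivity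
  have hreg : ExpRegret μ P H T xs (fun _ : Fin T => y)
      = ExpMistakes μ P T xs (fun _ : Fin T => y) := by
    rw [ExpRegret, hinf, sub_zero]
  rw [hreg]
  refine le_trans ?_ hley
  rw [div_le_div_iff₀ (by norm_num) hd0]
  have hdcast : (d : ℝ) = 2 * T * T + 1 := by rw [hd]; push_cast; ring
  have hT0 : (0 : ℝ) ≤ T := Nat.cast_nonneg T
  nlinarith [sq_nonneg ((T : ℝ) - 1), sq_nonneg ((T : ℝ))]

/-- If `sup_x |H(x)| = ∞`, then for every horizon `T`, every bandit online learner
suffers expected regret at least `(T − 1)/2` on some realizable stream; hence `H` is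
not online learnable under bandit feedback. -/
theorem stmt10 (H : Set (X → Y))
    (hsup : ∀ n : ℕ, ∃ x : X, (n : ℕ∞) ≤ (proj H x).encard) :
    (∀ (T : ℕ) (Ω : Type) (mΩ : MeasurableSpace Ω) (μ : Measure Ω),
      IsProbabilityMeasure μ →
      ∀ (A : (t : ℕ) → List X → (Fin t → Prop) → Ω → Y)
        (P : (T : ℕ) → (Fin T → X) → (Fin T → Y) → ℕ → Ω → Y),
        PredRec A P →
        (∀ (T : ℕ) (xs : Fin T → X) (ys : Fin T → Y) (t : Fin T),
          Measurable fun ω => (if P T xs ys t.1 ω ≠ ys t then (1 : ℝ) else 0)) →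
        ∃ (xs : Fin T → X) (h0 : X → Y), h0 ∈ H ∧
          ((T : ℝ) - 1) / 2 ≤ ExpRegret μ P H T xs (fun t => h0 (xs t))) ∧
    ¬ BanditOnlineLearnable H := by
  have main := stmt10_main H hsup
  refine ⟨main, ?_⟩
  rintro ⟨Ω, mΩ, μ, hμ, A, P, hrec, hmeas, R, hR, hreg⟩
  have hev : ∀ᶠ T : ℕ in atTop, R T / T < 1/4 :=
    hR.eventually (gt_mem_nhds (by norm_num : (0 : ℝ) < 1/4))
  obtain ⟨N, hN⟩ := eventually_atTop.mp hev
  set T : ℕ := max N 5 with hT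
  have hT5 : (5 : ℝ) ≤ T := by exact_mod_cast le_max_right N 5
  have hTpos : (0 : ℝ) < T := by linarith
  have hRT : R T / T < 1/4 := hN T (le_max_left N 5)
  have hRT' : R T < T / 4 := by
    have := (div_lt_iff₀ hTpos).mp hRT
    linarith
  obtain ⟨xs, h0, h0H, hge⟩ := main T Ω mΩ μ hμ A P hrec hmeas
  have hle := hreg T xs (fun t => h0 (xs t))
  linarith
end

section
/- If BL(H) = ∞ and C = sup_{x∈X} |H(x)| < ∞, then for every T, any bandit online learner suffers expected regret at least T/C on some realizable stream; hence H is not bandit online learnable. Combined with the case C = ∞, finiteness of BL(H) is necessary for bandit online learnability. -/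
open scoped Classical

variable {X : Type*} {Y : Type*}

open MeasureTheory Filter

section Aux

variable {X : Type*} {Y : Type*}

lemma sh_mono_class {G G' : Set (X → Y)} (hGG : G ⊆ G') {d Tr}
    (h : BLShattered G d Tr) : BLShattered G' d Tr := by
  intro y; obtain ⟨h0, h0G, hh⟩ := h y; exact ⟨h0, hGG h0G, hh⟩

lemma shd_mono_class {G G' : Set (X → Y)} (hGG : G ⊆ G') {d}
    (h : BLShatteredDepth G d) : BLShatteredDepth G' d := by
  obtain ⟨Tr, hTr⟩ := h; exact ⟨Tr, sh_mono_class hGG hTr⟩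

lemma shd_zero_of_nonempty [Nonempty X] {G : Set (X → Y)} (h : G.Nonempty) :
    BLShatteredDepth G 0 := by
  obtain ⟨g, hg⟩ := h
  exact ⟨fun _ => Classical.arbitrary X, fun y => ⟨g, hg, fun t => t.elim0⟩⟩

lemma nonempty_of_shd_zero {G : Set (X → Y)} (h : BLShatteredDepth G 0) :
    G.Nonempty := by
  obtain ⟨Tr, hTr⟩ := h
  obtain ⟨g, hg, -⟩ := hTr (fun t => t.elim0)
  exact ⟨g, hg⟩

lemma sh_subtree {G : Set (X → Y)} {d Tr} (h : BLShattered G (d+1) Tr) (y : Y) :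
    BLShattered {f ∈ G | f (Tr []) ≠ y} d (fun p => Tr (y :: p)) := by
  intro z
  obtain ⟨h0, h0G, hh⟩ := h (Fin.cons y z)
  have hofn : List.ofFn (Fin.cons y z : Fin (d+1) → Y) = y :: List.ofFn z := by
    rw [List.ofFn_succ]; simp
  refine ⟨h0, ⟨h0G, ?_⟩, ?_⟩
  · have := hh 0
    simpa [hofn] using this
  · intro t
    have := hh t.succ
    simp only [hofn, Fin.val_succ, List.take_succ_cons] at this
    simpa using this

lemma shd_succ_of_forall {G : Set (X → Y)} {d : ℕ} (x : X)
    (h : ∀ y : Y, BLShatteredDepth {f ∈ G | f x ≠ y} d) :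
    BLShatteredDepth G (d+1) := by
  choose Tr hTr using h
  refine ⟨fun p => match p with | [] => x | (y :: q) => Tr y q, ?_⟩
  intro z
  obtain ⟨h0, ⟨h0G, h0x⟩, hh⟩ := hTr (z 0) (Fin.tail z)
  have hofn : List.ofFn z = z 0 :: List.ofFn (Fin.tail z) := by
    rw [List.ofFn_succ]; rfl
  refine ⟨h0, h0G, ?_⟩
  intro t
  induction t using Fin.cases with
  | zero => simpa using h0x
  | succ s =>
    have := hh s
    simp only [hofn, Fin.val_succ, List.take_succ_cons] at this ⊢
    exact this

lemma sh_pred [Nonempty Y] {G : Set (X → Y)} {d Tr}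
    (h : BLShattered G (d+1) Tr) : BLShattered G d Tr := by
  intro y
  obtain ⟨h0, h0G, hh⟩ := h (Fin.snoc y (Classical.arbitrary Y))
  refine ⟨h0, h0G, fun t => ?_⟩
  have := hh t.castSucc
  have hofn : List.ofFn (Fin.snoc y (Classical.arbitrary Y) : Fin (d+1) → Y)
      = List.ofFn y ++ [Classical.arbitrary Y] := by
    rw [List.ofFn_succ']; simp [Fin.snoc_castSucc]
  rw [hofn] at this
  rw [List.take_append_of_le_length (by simpa using Nat.le_of_lt t.isLt)] at this
  simpa [Fin.snoc_castSucc] using this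

lemma sh_mono_depth [Nonempty Y] {G : Set (X → Y)} {Tr} :
    ∀ d, BLShattered G d Tr → ∀ d' ≤ d, BLShattered G d' Tr
  | 0, h, d', hd => by rw [Nat.le_zero.mp hd]; exact h
  | (d+1), h, d', hd => by
    rcases Nat.lt_or_ge d' (d+1) with hlt | hge
    · exact sh_mono_depth d (sh_pred h) d' (Nat.lt_succ_iff.mp hlt)
    · have he : d' = d+1 := le_antisymm hd hge
      rw [he]; exact h

lemma shd_mono_depth [Nonempty Y] {G : Set (X → Y)} {d d' : ℕ} (hdd : d' ≤ d)
    (h : BLShatteredDepth G d) : BLShatteredDepth G d' := by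
  obtain ⟨Tr, hTr⟩ := h
  exact ⟨Tr, sh_mono_depth d hTr d' hdd⟩

lemma union_not_shd [Nonempty X] [Nonempty Y] :
    ∀ n a b (G₁ G₂ : Set (X → Y)), a + b ≤ n →
      ¬BLShatteredDepth G₁ a → ¬BLShatteredDepth G₂ b →
      ¬BLShatteredDepth (G₁ ∪ G₂) (a + b) := by
  intro n
  induction n with
  | zero =>
    intro a b G₁ G₂ hn h1 h2
    have ha : a = 0 := by omega
    have hb : b = 0 := by omega
    subst ha; subst hb
    simp only [Nat.add_zero]
    intro hsh
    obtain ⟨g, hg⟩ := nonempty_of_shd_zero hsh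
    rcases hg with hg | hg
    · exact h1 (shd_zero_of_nonempty ⟨g, hg⟩)
    · exact h2 (shd_zero_of_nonempty ⟨g, hg⟩)
  | succ n ih =>
    intro a b G₁ G₂ hn h1 h2
    match a, b with
    | 0, b =>
      have hG1 : G₁ = ∅ := by
        by_contra hne
        exact h1 (shd_zero_of_nonempty (Set.nonempty_iff_ne_empty.mpr hne))
      simpa [hG1] using h2
    | a, 0 =>
      have hG2 : G₂ = ∅ := by
        by_contra hne
        exact h2 (shd_zero_of_nonempty (Set.nonempty_iff_ne_empty.mpr hne))
      simpa [hG2] using h1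
    | (a'+1), (b'+1) =>
      intro hsh
      obtain ⟨Tr, hTr⟩ := hsh
      set x := Tr ([] : List Y) with hx
      have hsub : ∀ y : Y, BLShatteredDepth
          ({f ∈ G₁ | f x ≠ y} ∪ {f ∈ G₂ | f x ≠ y}) (a' + (b'+1)) := by
        intro y
        have h' := sh_subtree (d := a' + (b'+1)) (by
          have : a' + 1 + (b' + 1) = (a' + (b'+1)) + 1 := by ring
          rw [this] at hTr; exact hTr) y
        refine ⟨fun p => Tr (y :: p), sh_mono_class ?_ h'⟩
        rintro f ⟨hf | hf, hfx⟩
        · exact Or.inl ⟨hf, hfx⟩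
        · exact Or.inr ⟨hf, hfx⟩
      have hG1y : ∀ y : Y, BLShatteredDepth {f ∈ G₁ | f x ≠ y} a' := by
        intro y
        by_contra hno
        have h2y : ¬BLShatteredDepth {f ∈ G₂ | f x ≠ y} (b'+1) :=
          fun hc => h2 (shd_mono_class (fun f hf => hf.1) hc)
        exact ih a' (b'+1) _ _ (by omega) hno h2y (hsub y)
      exact h1 (shd_succ_of_forall x hG1y)

lemma finset_union_not_shd [Nonempty X] [Nonempty Y]
    (V : Finset Y) (Gf : Y → Set (X → Y)) (k : ℕ)
    (h : ∀ v ∈ V, ¬BLShatteredDepth (Gf v) k) :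
    ¬BLShatteredDepth (⋃ v ∈ V, Gf v) (k * V.card) := by
  induction V using Finset.induction with
  | empty =>
    simp only [Finset.card_empty, Nat.mul_zero]
    intro hsh
    obtain ⟨g, hg⟩ := nonempty_of_shd_zero hsh
    simpa using hg
  | @insert a s ha ih =>
    have hu : (⋃ v ∈ insert a s, Gf v) = Gf a ∪ ⋃ v ∈ s, Gf v := by
      simp [Set.biUnion_insert]
    rw [hu, Finset.card_insert_of_notMem ha, Nat.mul_add, Nat.mul_one, Nat.add_comm]
    exact union_not_shd (k + k * s.card) k (k * s.card) _ _ le_rfl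
      (h a (Finset.mem_insert_self a s)) (ih fun v hv => h v (Finset.mem_insert_of_mem hv))

def Good : Set (X → Y) → ℕ → Prop
  | G, 0 => G.Nonempty
  | G, (k+1) => ∃ x : X, ∀ y : Y, ∃ v : Y, v ≠ y ∧ Good {h ∈ G | h x = v} k

def NN (C : ℕ) : ℕ → ℕ
  | 0 => 0
  | (k+1) => (NN C k + 1) * C + 1

lemma goodOf [Nonempty X] [Nonempty Y] (C : ℕ) :
    ∀ (k : ℕ) (G : Set (X → Y)), (∀ x : X, (proj G x).encard ≤ (C : ℕ∞)) →
      BLShatteredDepth G (NN C k) → Good G k := by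
  intro k
  induction k with
  | zero => exact fun G _ h => nonempty_of_shd_zero h
  | succ k ih =>
    intro G hproj hsh
    obtain ⟨Tr, hTr⟩ := hsh
    set x := Tr ([] : List Y) with hx
    refine ⟨x, fun y => ?_⟩
    have hfin : (proj G x).Finite := by
      rcases Set.encard_le_coe_iff.mp (hproj x) with ⟨hf, -⟩
      exact hf
    set S : Finset Y := (hfin.toFinset.erase y) with hS
    have hcard : S.card ≤ C := by
      have h1 : hfin.toFinset.card ≤ C := by
        rcases Set.encard_le_coe_iff.mp (hproj x) with ⟨hf, n₀, hn₀, hle⟩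
        have h2 : (hfin.toFinset.card : ℕ∞) = (proj G x).encard :=
          (Set.Finite.encard_eq_coe_toFinset_card hfin).symm
        rw [hn₀] at h2
        have : hfin.toFinset.card = n₀ := by exact_mod_cast h2
        omega
      exact le_trans (Finset.card_erase_le) h1
    have hsub : BLShatteredDepth {f ∈ G | f x ≠ y} ((NN C k + 1) * C) := by
      have h' := sh_subtree (d := (NN C k + 1) * C) (by
        have : NN C (k+1) = ((NN C k + 1) * C) + 1 := rfl
        rw [this] at hTr; exact hTr) y
      exact ⟨_, h'⟩
    have hsubset : {f ∈ G | f x ≠ y} ⊆ ⋃ v ∈ S, {h ∈ G | h x = v} := by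
      rintro f ⟨hf, hfx⟩
      have hmem : f x ∈ S := by
        simp only [hS, Finset.mem_erase, Set.Finite.mem_toFinset]
        exact ⟨hfx, ⟨f, hf, rfl⟩⟩
      exact Set.mem_biUnion hmem ⟨hf, rfl⟩
    by_contra hno
    push_neg at hno
    have hpieces : ∀ v ∈ S, ¬BLShatteredDepth {h ∈ G | h x = v} (NN C k + 1) := by
      intro v hv hc
      have hgood : Good {h ∈ G | h x = v} k := by
        refine ih _ (fun x' => le_trans ?_ (hproj x')) (shd_mono_depth (by omega) hc)
        refine Set.encard_mono (fun z hz => ?_)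
        obtain ⟨h0, hh0, h⟩ := hz
        exact ⟨h0, hh0.1, h⟩
      have hvy : v ≠ y := (Finset.mem_erase.mp hv).1
      exact (hno v hvy) hgood
    have hbig := finset_union_not_shd S _ (NN C k + 1) hpieces
    have : ¬BLShatteredDepth {f ∈ G | f x ≠ y} ((NN C k + 1) * S.card) :=
      fun hc => hbig (shd_mono_class hsubset hc)
    exact this (shd_mono_depth (Nat.mul_le_mul_left _ hcard) hsub)

lemma good_nonempty [Nonempty Y] : ∀ (k : ℕ) (G : Set (X → Y)), Good G k → G.Nonempty := by
  intro k
  induction k with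
  | zero => exact fun G h => h
  | succ k ih =>
    rintro G ⟨x, hx⟩
    obtain ⟨v, -, hv⟩ := hx (Classical.arbitrary Y)
    obtain ⟨g, hg, -⟩ := ih _ hv
    exact ⟨g, hg⟩

lemma commit [Nonempty X] [Nonempty Y] :
    ∀ (k : ℕ) (G : Set (X → Y)), Good G k →
      ∃ (τ : List Y → X) (g : List Y → Y → Y),
        (∀ (p : List Y) (z : Y), p.length < k → g p z ≠ z) ∧
        (∀ (p : List Y) (z : Y), p.length < k → g p z ∈ proj G (τ p)) ∧
        (∀ y : Fin k → Y, ∃ h ∈ G, ∀ t : Fin k,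
          h (τ ((List.ofFn y).take t.1)) = g ((List.ofFn y).take t.1) (y t)) := by
  intro k
  induction k with
  | zero =>
    intro G hG
    refine ⟨fun _ => Classical.arbitrary X, fun _ z => z, ?_, ?_, ?_⟩
    · intro p z hp; omega
    · intro p z hp; omega
    · intro y
      obtain ⟨h, hh⟩ := hG
      exact ⟨h, hh, fun t => t.elim0⟩
  | succ k ih =>
    rintro G ⟨x, hx⟩
    choose v hv hvgood using hx
    have hIH := fun y : Y => ih _ (hvgood y)
    choose τf gf hg1 hg2 hg3 using hIH
    refine ⟨fun p => match p with | [] => x | (y :: q) => τf y q,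
      fun p z => match p with | [] => v z | (y :: q) => gf y q z, ?_, ?_, ?_⟩
    · rintro (⟨⟩ | ⟨y, q⟩) z hp
      · exact hv z
      · exact hg1 y q z (by simpa using Nat.lt_of_succ_lt_succ hp)
    · rintro (⟨⟩ | ⟨y, q⟩) z hp
      · obtain ⟨h, hh, hhx⟩ := good_nonempty k _ (hvgood z)
        exact ⟨h, hh, hhx⟩
      · obtain ⟨h, hh, hhx⟩ := hg2 y q z (by simpa using Nat.lt_of_succ_lt_succ hp)
        exact ⟨h, hh.1, hhx⟩
    · intro y
      obtain ⟨h, ⟨hhG, hhx⟩, hh⟩ := hg3 (y 0) (Fin.tail y)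
      have hofn : List.ofFn y = y 0 :: List.ofFn (Fin.tail y) := by
        rw [List.ofFn_succ]; rfl
      refine ⟨h, hhG, fun t => ?_⟩
      induction t using Fin.cases with
      | zero => simpa using hhx
      | succ s =>
        have := hh s
        simp only [hofn, Fin.val_succ, List.take_succ_cons]
        exact this

def buildL {Y : Type*} {C : ℕ} (step : List Y → Fin C → Y) (w : ℕ → Fin C) : ℕ → List Y
  | 0 => []
  | (n+1) => buildL step w n ++ [step (buildL step w n) (w n)]

lemma buildL_length {Y : Type*} {C : ℕ} (step : List Y → Fin C → Y) (w : ℕ → Fin C) :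
    ∀ n, (buildL step w n).length = n
  | 0 => rfl
  | (n+1) => by simp [buildL, buildL_length step w n]

lemma buildL_dep {Y : Type*} {C : ℕ} (step : List Y → Fin C → Y) (w w' : ℕ → Fin C) :
    ∀ n, (∀ m < n, w m = w' m) → buildL step w n = buildL step w' n
  | 0, _ => rfl
  | (n+1), h => by
    have hn := buildL_dep step w w' n (fun m hm => h m (by omega))
    simp [buildL, hn, h n (by omega)]

end Aux

section AuxP

variable {X : Type*} {Y : Type*}

lemma pred_dep {Ω : Type}
    {A : (t : ℕ) → List X → (Fin t → Prop) → Ω → Y}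
    {P : (T : ℕ) → (Fin T → X) → (Fin T → Y) → ℕ → Ω → Y}
    (hrec : PredRec A P) (T : ℕ) :
    ∀ (n : ℕ), n < T → ∀ (xs xs' : Fin T → X) (ys ys' : Fin T → Y) (ω : Ω),
      (∀ s : Fin T, s.1 ≤ n → xs s = xs' s) →
      (∀ s : Fin T, s.1 < n → ys s = ys' s) →
      P T xs ys n ω = P T xs' ys' n ω := by
  intro n
  induction n using Nat.strong_induction_on with
  | _ n IH =>
    intro hn xs xs' ys ys' ω hxs hys
    rw [hrec T xs ys ⟨n, hn⟩ ω, hrec T xs' ys' ⟨n, hn⟩ ω]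
    have hL : (List.ofFn xs).take (n+1) = (List.ofFn xs').take (n+1) := by
      apply List.ext_getElem
      · simp
      · intro i h1 h2
        have h1' : i < n + 1 ∧ i < T := by simpa using h1
        have hiT : i < T := h1'.2
        have hin : i ≤ n := by omega
        rw [List.getElem_take, List.getElem_take]
        simp only [List.getElem_ofFn]
        exact hxs ⟨i, hiT⟩ hin
    have hF : (fun s : Fin n => P T xs ys s.1 ω ≠ ys ⟨s.1, s.isLt.trans hn⟩) =
        (fun s : Fin n => P T xs' ys' s.1 ω ≠ ys' ⟨s.1, s.isLt.trans hn⟩) := by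
      funext s
      have hP : P T xs ys s.1 ω = P T xs' ys' s.1 ω := by
        refine IH s.1 s.isLt (s.isLt.trans hn) xs xs' ys ys' ω ?_ ?_
        · exact fun z hz => hxs z (le_trans hz (Nat.le_of_lt s.isLt))
        · exact fun z hz => hys z (lt_trans hz s.isLt)
      have hy : ys ⟨s.1, s.isLt.trans hn⟩ = ys' ⟨s.1, s.isLt.trans hn⟩ :=
        hys _ s.isLt
      rw [hP, hy]
    rw [hL, hF]

end AuxP

/-- If `BL(H) = ∞` (shattered BL trees of every depth exist) while
`C = sup_x |H(x)| < ∞`, then for every horizon `T`, every bandit online learner suffers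
expected regret at least `T / C` on some realizable stream; hence `H` is not online
learnable under bandit feedback (so finiteness of `BL(H)` is necessary for bandit
online learnability). -/
theorem stmt11 (H : Set (X → Y)) (C : ℕ) (hC : 0 < C)
    (hBL : ∀ d : ℕ, BLShatteredDepth H d)
    (hproj : ∀ x : X, (proj H x).encard ≤ (C : ℕ∞)) :
    (∀ (T : ℕ) (Ω : Type) (mΩ : MeasurableSpace Ω) (μ : Measure Ω),
      IsProbabilityMeasure μ →
      ∀ (A : (t : ℕ) → List X → (Fin t → Prop) → Ω → Y)
        (P : (T : ℕ) → (Fin T → X) → (Fin T → Y) → ℕ → Ω → Y),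
        PredRec A P →
        (∀ (T : ℕ) (xs : Fin T → X) (ys : Fin T → Y) (t : Fin T),
          Measurable fun ω => (if P T xs ys t.1 ω ≠ ys t then (1 : ℝ) else 0)) →
        ∃ (xs : Fin T → X) (h0 : X → Y), h0 ∈ H ∧
          (T : ℝ) / C ≤ ExpRegret μ P H T xs (fun t => h0 (xs t))) ∧
    ¬ BanditOnlineLearnable H := by
  classical
  obtain ⟨Tr1, -⟩ := hBL 1
  haveI hXne : Nonempty X := ⟨Tr1 []⟩
  have hHne : H.Nonempty := nonempty_of_shd_zero (hBL 0)
  obtain ⟨hstar, hstarH⟩ := hHne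
  haveI hYne : Nonempty Y := ⟨hstar (Tr1 [])⟩
  have hCR : (0:ℝ) < C := by exact_mod_cast hC
  have part1 : ∀ (T : ℕ) (Ω : Type) (mΩ : MeasurableSpace Ω) (μ : Measure Ω),
      IsProbabilityMeasure μ →
      ∀ (A : (t : ℕ) → List X → (Fin t → Prop) → Ω → Y)
        (P : (T : ℕ) → (Fin T → X) → (Fin T → Y) → ℕ → Ω → Y),
        PredRec A P →
        (∀ (T : ℕ) (xs : Fin T → X) (ys : Fin T → Y) (t : Fin T),
          Measurable fun ω => (if P T xs ys t.1 ω ≠ ys t then (1 : ℝ) else 0)) →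
        ∃ (xs : Fin T → X) (h0 : X → Y), h0 ∈ H ∧
          (T : ℝ) / C ≤ ExpRegret μ P H T xs (fun t => h0 (xs t)) := by
    intro T Ω mΩ μ hμ A P hrec hmeas
    have hgood : Good H T := goodOf C T H hproj (hBL (NN C T))
    obtain ⟨τ, g, hg1, hg2, hg3⟩ := commit T H hgood
    -- surjections from Fin C onto the projections
    have hembex : ∀ x : X, ∃ f : Fin C → Y, ∀ z ∈ proj H x, ∃ c : Fin C, f c = z := by
      intro x
      have hfin : (proj H x).Finite := (Set.encard_le_coe_iff.mp (hproj x)).1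
      have hlen : hfin.toFinset.toList.length ≤ C := by
        rw [Finset.length_toList]
        rcases Set.encard_le_coe_iff.mp (hproj x) with ⟨hf, n₀, hn₀, hle⟩
        have h2 : (hfin.toFinset.card : ℕ∞) = (proj H x).encard :=
          (Set.Finite.encard_eq_coe_toFinset_card hfin).symm
        rw [hn₀] at h2
        have : hfin.toFinset.card = n₀ := by exact_mod_cast h2
        omega
      refine ⟨fun c => hfin.toFinset.toList.getD c.1 (hstar x), fun z hz => ?_⟩
      have hzl : z ∈ hfin.toFinset.toList := by
        rw [Finset.mem_toList, Set.Finite.mem_toFinset]; exact hz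
      obtain ⟨i, hi⟩ := List.mem_iff_get.mp hzl
      refine ⟨⟨i.1, lt_of_lt_of_le i.isLt hlen⟩, ?_⟩
      show hfin.toFinset.toList.getD i.1 (hstar x) = z
      rw [List.getD_eq_getElem _ _ i.isLt]
      simpa using hi
    choose emb hemb using hembex
    -- the randomized stream indexed by u : Fin T → Fin C
    set step : List Y → Fin C → Y := fun p c => emb (τ p) c with hstepd
    set uu : (Fin T → Fin C) → ℕ → Fin C :=
      fun u n => if h : n < T then u ⟨n, h⟩ else ⟨0, hC⟩ with huud
    set xs : (Fin T → Fin C) → Fin T → X :=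
      fun u t => τ (buildL step (uu u) t.1) with hxsd
    set yy : (Fin T → Fin C) → Fin T → Y :=
      fun u t => step (buildL step (uu u) t.1) (uu u t.1) with hyyd
    set ys : (Fin T → Fin C) → Fin T → Y :=
      fun u t => g (buildL step (uu u) t.1) (yy u t) with hysd
    have htake : ∀ (u : Fin T → Fin C) (n : ℕ), n ≤ T →
        (List.ofFn (yy u)).take n = buildL step (uu u) n := by
      intro u n
      induction n with
      | zero => intro _; simp [buildL]
      | succ m ih =>
        intro hn
        have hm : m < T := by omega
        rw [List.take_succ, ih (by omega)]
        have hg : (List.ofFn (yy u))[m]? = some (yy u ⟨m, hm⟩) := by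
          rw [List.getElem?_ofFn]; simp [List.ofFnNthVal, hm]
        rw [hg]
        simp only [hyyd, buildL, Option.toList_some]
    -- realizability
    have hreal : ∀ u, ∃ h ∈ H, ∀ t : Fin T, h (xs u t) = ys u t := by
      intro u
      obtain ⟨h, hh, hp⟩ := hg3 (yy u)
      refine ⟨h, hh, fun t => ?_⟩
      have h2 := hp t
      rw [htake u t.1 (le_of_lt t.isLt)] at h2
      exact h2
    choose hw hwH hwP using hreal
    -- prediction dependence
    have hPdep : ∀ (u u' : Fin T → Fin C) (t : Fin T) (ω : Ω),
        (∀ s : Fin T, s.1 < t.1 → u s = u' s) →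
        P T (xs u) (ys u) t.1 ω = P T (xs u') (ys u') t.1 ω ∧
        buildL step (uu u) t.1 = buildL step (uu u') t.1 := by
      intro u u' t ω hagree
      have hLeq : ∀ n ≤ t.1, buildL step (uu u) n = buildL step (uu u') n := by
        intro n hn
        apply buildL_dep
        intro m hm
        have htT := t.isLt
        have hmT : m < T := by omega
        simp only [huud, dif_pos hmT]
        have hmt : m < t.1 := by omega
        exact hagree ⟨m, hmT⟩ hmt
      have huus : ∀ s : Fin T, s.1 < t.1 → uu u s.1 = uu u' s.1 := by
        intro s hs
        simp only [huud, dif_pos s.isLt, Fin.eta]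
        exact hagree s hs
      refine ⟨?_, hLeq t.1 le_rfl⟩
      refine pred_dep hrec T t.1 t.isLt (xs u) (xs u') (ys u) (ys u') ω ?_ ?_
      · intro s hs
        simp only [hxsd]
        rw [hLeq s.1 hs]
      · intro s hs
        simp only [hysd, hyyd]
        rw [hLeq s.1 (le_of_lt hs), huus s hs]
    -- integrability
    have hInt : ∀ (u : Fin T → Fin C) (t : Fin T),
        Integrable (fun ω => if P T (xs u) (ys u) t.1 ω ≠ ys u t then (1:ℝ) else 0) μ := by
      intro u t
      refine (integrable_const (1:ℝ)).mono'
        (hmeas T (xs u) (ys u) t).aestronglyMeasurable (ae_of_all μ fun ω => ?_)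
      split <;> simp
    -- per-round bound
    have hstep2 : ∀ t : Fin T, ((Fintype.card (Fin T → Fin C) : ℝ) / C) ≤
        ∑ u : Fin T → Fin C,
          ∫ ω, (if P T (xs u) (ys u) t.1 ω ≠ ys u t then (1:ℝ) else 0) ∂μ := by
      intro t
      set K : ℕ := Fintype.card ({s : Fin T // s ≠ t} → Fin C) with hK
      have hcard : Fintype.card (Fin T → Fin C) = C * K := by
        rw [Fintype.card_congr (Equiv.piSplitAt t fun _ => Fin C)]
        simp [hK]
      -- pointwise bound
      have hpoint : ∀ ω : Ω, (K : ℝ) ≤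
          ∑ u : Fin T → Fin C,
            (if P T (xs u) (ys u) t.1 ω ≠ ys u t then (1:ℝ) else 0) := by
        intro ω
        set e := Equiv.piSplitAt t (fun _ : Fin T => Fin C) with he
        rw [← Equiv.sum_comp e.symm
          (fun u => (if P T (xs u) (ys u) t.1 ω ≠ ys u t then (1:ℝ) else 0))]
        rw [Fintype.sum_prod_type, Finset.sum_comm]
        have hKsum : (K : ℝ) = ∑ _v : {s : Fin T // s ≠ t} → Fin C, (1:ℝ) := by
          simp [hK]
        rw [hKsum]
        apply Finset.sum_le_sum
        intro v _
        set u0 : Fin T → Fin C := e.symm (⟨0, hC⟩, v) with hu0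
        set p := buildL step (uu u0) t.1 with hpd
        set q := P T (xs u0) (ys u0) t.1 ω with hqd
        have hagree : ∀ (c : Fin C) (s : Fin T), s.1 < t.1 → (e.symm (c, v)) s = u0 s := by
          intro c s hs
          have hst : s ≠ t := fun h => by rw [h] at hs; omega
          simp [he, Equiv.piSplitAt_symm_apply, dif_neg hst, hu0]
        have hPeq := fun c : Fin C => hPdep (e.symm (c, v)) u0 t ω (hagree c)
        have hcoord : ∀ c : Fin C, uu (e.symm (c, v)) t.1 = c := by
          intro c
          simp only [huud, dif_pos t.isLt, Fin.eta]
          simp [he, Equiv.piSplitAt_symm_apply]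
        have hyst : ∀ c : Fin C, ys (e.symm (c, v)) t = g p (emb (τ p) c) := by
          intro c
          simp only [hysd, hyyd, hstepd]
          rw [(hPeq c).2, hcoord c]
        have hplen : p.length < T := by
          rw [hpd, buildL_length]
          exact t.isLt
        -- pick a coordinate forcing a mistake
        have hpick : ∃ c0 : Fin C,
            P T (xs (e.symm (c0, v))) (ys (e.symm (c0, v))) t.1 ω ≠ ys (e.symm (c0, v)) t := by
          by_cases hqp : q ∈ proj H (τ p)
          · obtain ⟨c0, hc0⟩ := hemb (τ p) q hqp
            refine ⟨c0, ?_⟩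
            rw [(hPeq c0).1, hyst c0, hc0, ← hqd]
            exact fun h => (hg1 p q hplen) h.symm
          · refine ⟨⟨0, hC⟩, ?_⟩
            rw [(hPeq ⟨0, hC⟩).1, hyst ⟨0, hC⟩, ← hqd]
            intro h
            exact hqp (h ▸ hg2 p (emb (τ p) ⟨0, hC⟩) hplen)
        obtain ⟨c0, hc0⟩ := hpick
        calc (1:ℝ) = (if P T (xs (e.symm (c0, v))) (ys (e.symm (c0, v))) t.1 ω
              ≠ ys (e.symm (c0, v)) t then (1:ℝ) else 0) := by rw [if_pos hc0]
          _ ≤ ∑ c : Fin C, (if P T (xs (e.symm (c, v))) (ys (e.symm (c, v))) t.1 ω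
              ≠ ys (e.symm (c, v)) t then (1:ℝ) else 0) := by
            refine Finset.single_le_sum (f := fun c : Fin C =>
              (if P T (xs (e.symm (c, v))) (ys (e.symm (c, v))) t.1 ω
                ≠ ys (e.symm (c, v)) t then (1:ℝ) else 0)) (fun c _ => ?_)
              (Finset.mem_univ c0)
            split <;> norm_num
      -- integrate
      have h1 : ((Fintype.card (Fin T → Fin C) : ℝ) / C) = (K : ℝ) := by
        rw [hcard]
        push_cast
        field_simp
      rw [h1, ← integral_finset_sum _ (fun u _ => hInt u t)]
      calc (K : ℝ) = ∫ _ω, (K : ℝ) ∂μ := by simp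
        _ ≤ _ := integral_mono (integrable_const _)
            (integrable_finset_sum _ fun u _ => hInt u t) hpoint
    -- total bound
    have htot : (Fintype.card (Fin T → Fin C) : ℝ) * ((T:ℝ)/C) ≤
        ∑ u : Fin T → Fin C, ExpMistakes μ P T (xs u) (ys u) := by
      have hEM : ∀ u, ExpMistakes μ P T (xs u) (ys u) =
          ∑ t : Fin T, ∫ ω, (if P T (xs u) (ys u) t.1 ω ≠ ys u t then (1:ℝ) else 0) ∂μ :=
        fun u => rfl
      simp only [hEM]
      rw [Finset.sum_comm]
      calc (Fintype.card (Fin T → Fin C) : ℝ) * ((T:ℝ)/C)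
          = ∑ _t : Fin T, ((Fintype.card (Fin T → Fin C) : ℝ) / C) := by
            simp [Finset.sum_const, Finset.card_univ, nsmul_eq_mul]
            ring
        _ ≤ _ := Finset.sum_le_sum fun t _ => hstep2 t
    haveI hWne : Nonempty (Fin T → Fin C) := ⟨fun _ => ⟨0, hC⟩⟩
    have hconst : ∑ _u : Fin T → Fin C, ((T:ℝ)/C) =
        (Fintype.card (Fin T → Fin C) : ℝ) * ((T:ℝ)/C) := by
      simp [Finset.sum_const, Finset.card_univ, nsmul_eq_mul]
    obtain ⟨u, -, hu⟩ := Finset.exists_le_of_sum_le Finset.univ_nonempty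
      (le_trans (le_of_eq hconst) htot)
    refine ⟨xs u, hw u, hwH u, ?_⟩
    have hysfun : (fun t => hw u (xs u t)) = ys u := funext (hwP u)
    rw [hysfun]
    have hinf : (⨅ h : H, ∑ t : Fin T,
        (if (h : X → Y) (xs u t) ≠ ys u t then (1:ℝ) else 0)) = 0 := by
      haveI : Nonempty H := ⟨⟨hw u, hwH u⟩⟩
      apply le_antisymm
      · calc (⨅ h : H, ∑ t : Fin T, (if (h : X → Y) (xs u t) ≠ ys u t then (1:ℝ) else 0))
            ≤ ∑ t : Fin T, (if hw u (xs u t) ≠ ys u t then (1:ℝ) else 0) := by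
              refine ciInf_le ⟨0, ?_⟩ (⟨hw u, hwH u⟩ : H)
              rintro r ⟨h, rfl⟩
              exact Finset.sum_nonneg fun t _ => by split <;> norm_num
          _ = 0 := Finset.sum_eq_zero fun t _ => by
              rw [if_neg]
              exact fun hcon => hcon (hwP u t)
      · exact le_ciInf fun h => Finset.sum_nonneg fun t _ => by split <;> norm_num
    show (T:ℝ)/C ≤ ExpMistakes μ P T (xs u) (ys u) - _
    rw [hinf, sub_zero]
    exact hu
  refine ⟨part1, ?_⟩
  rintro ⟨Ω, mΩ, μ, hprob, A, P, hrec, hmeas, R, hRlim, hRbd⟩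
  have hCinv : (0:ℝ) < 1 / C := by positivity
  obtain ⟨T0, hT0⟩ := Filter.eventually_atTop.mp (hRlim.eventually_lt_const hCinv)
  set T := max T0 1 with hT
  have h1 : R T / T < 1/C := hT0 T (le_max_left _ _)
  have hTpos : (0:ℝ) < (T:ℝ) := by
    have : (1:ℕ) ≤ T := le_max_right _ _
    exact_mod_cast Nat.lt_of_lt_of_le Nat.zero_lt_one this
  obtain ⟨xs, h0, h0H, hreg⟩ := part1 T Ω mΩ μ hprob A P hrec hmeas
  have hle := hRbd T xs (fun t => h0 (xs t))
  have h2 : (T:ℝ)/C ≤ R T := le_trans hreg hle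
  have h3 : R T < (1/(C:ℝ)) * (T:ℝ) := (div_lt_iff₀ hTpos).mp h1
  have h4 : (1/(C:ℝ)) * (T:ℝ) = (T:ℝ)/C := by ring
  linarith
end
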